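/- arXiv:1602.06268 — 5 statements merged into one kernel-verified Lean document; each statement's English description precedes it below -/
import Mathlib

section
/- For every Ĉ > 0, T > 0 and M₁ > 0 there exists M > 0 such that the following holds: for every ν > 0, every β ∈ (0,1), and every data (h, η, F) satisfying the hypotheses of the quasilinear existence theorem (h ∈ C^{2+β}_b; ∂_t F, ∂_x F, ∂_y F, ∂_t η, ∂_x η continuous; |η| + [η]ˣ_β + [η]ᵗ_{β/2} and [F]ᵗ_{β/2} + [F]ˣ_β + [F]ʸ_β/(1+|y|) finite) with the growth bound |F(t,x,y)| ≤ Ĉ(1+|y|) for all (t,x,y) and sup_{x∈ℝⁿ} |h(x)| ≤ M₁, every solution y ∈ C^{1,2}_b([0,T]×ℝⁿ) of ∂_t y = ν Δy − ((η+y),∇)y + F(t,x,y), y(0,·) = h, satisfies sup_{[0,T]×ℝⁿ} |y(t,x)| ≤ M. In particular the bound M is independent of the viscosity ν. -/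
open Set MeasureTheory intervalIntegral

noncomputable def dirDeriv {n : ℕ} (f : (Fin n → ℝ) → Fin n → ℝ) (x u : Fin n → ℝ) :
    Fin n → ℝ :=
  fderiv ℝ f x u

noncomputable def lap {n : ℕ} (f : (Fin n → ℝ) → Fin n → ℝ) (x : Fin n → ℝ) : Fin n → ℝ :=
  ∑ j : Fin n, fderiv ℝ (fun z => fderiv ℝ f z (Pi.single j 1)) x (Pi.single j 1)

/-- The class `C^{1,2}_b([0,T]×ℝⁿ)`: bounded, continuously differentiable once in `t`
(on `[0,T]`) and twice in `x`, with bounded derivatives. -/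
def C12b {n : ℕ} (T : ℝ) (y : ℝ → (Fin n → ℝ) → Fin n → ℝ) : Prop :=
  ContinuousOn (fun p : ℝ × (Fin n → ℝ) => y p.1 p.2)
    (Icc (0:ℝ) T ×ˢ (univ : Set (Fin n → ℝ))) ∧
  (∀ t ∈ Icc (0:ℝ) T, ContDiff ℝ 2 (y t)) ∧
  (∀ x : Fin n → ℝ, ∀ t ∈ Icc (0:ℝ) T,
    DifferentiableWithinAt ℝ (fun s => y s x) (Icc (0:ℝ) T) t) ∧
  ContinuousOn (fun p : ℝ × (Fin n → ℝ) =>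
      derivWithin (fun s => y s p.2) (Icc (0:ℝ) T) p.1)
    (Icc (0:ℝ) T ×ˢ (univ : Set (Fin n → ℝ))) ∧
  ContinuousOn (fun p : ℝ × (Fin n → ℝ) => fderiv ℝ (y p.1) p.2)
    (Icc (0:ℝ) T ×ˢ (univ : Set (Fin n → ℝ))) ∧
  ContinuousOn (fun p : ℝ × (Fin n → ℝ) => fderiv ℝ (fun z => fderiv ℝ (y p.1) z) p.2)
    (Icc (0:ℝ) T ×ˢ (univ : Set (Fin n → ℝ))) ∧
  ∃ M : ℝ, ∀ t ∈ Icc (0:ℝ) T, ∀ x,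
    ‖y t x‖ ≤ M ∧ ‖derivWithin (fun s => y s x) (Icc (0:ℝ) T) t‖ ≤ M ∧
    ‖fderiv ℝ (y t) x‖ ≤ M ∧ ‖fderiv ℝ (fun z => fderiv ℝ (y t) z) x‖ ≤ M

/-- `h ∈ C^{2+β}_b(ℝⁿ,ℝⁿ)`. -/
def Holder2b {n : ℕ} (β : ℝ) (h : (Fin n → ℝ) → Fin n → ℝ) : Prop :=
  ContDiff ℝ 2 h ∧
  (∃ M : ℝ, ∀ x, ‖h x‖ ≤ M ∧ ‖fderiv ℝ h x‖ ≤ M ∧ ‖fderiv ℝ (fderiv ℝ h) x‖ ≤ M) ∧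
  (∃ Ch : ℝ, ∀ x x', 0 < ‖x - x'‖ → ‖x - x'‖ < 1 →
    ‖fderiv ℝ (fderiv ℝ h) x - fderiv ℝ (fderiv ℝ h) x'‖ ≤ Ch * ‖x - x'‖ ^ β)

/-- The partial derivatives `∂_t F`, `∂_x F`, `∂_y F`, `∂_t η`, `∂_x η` exist and are
continuous on `[0,T]`. -/
def QDataPartials {n : ℕ} (T : ℝ) (η : ℝ → (Fin n → ℝ) → Fin n → ℝ)
    (F : ℝ → (Fin n → ℝ) → (Fin n → ℝ) → Fin n → ℝ) : Prop :=
  (∀ (x v : Fin n → ℝ), ∀ t ∈ Icc (0:ℝ) T,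
    DifferentiableWithinAt ℝ (fun s => F s x v) (Icc (0:ℝ) T) t) ∧
  ContinuousOn (fun p : ℝ × (Fin n → ℝ) × (Fin n → ℝ) =>
      derivWithin (fun s => F s p.2.1 p.2.2) (Icc (0:ℝ) T) p.1)
    (Icc (0:ℝ) T ×ˢ (univ : Set ((Fin n → ℝ) × (Fin n → ℝ)))) ∧
  (∀ t ∈ Icc (0:ℝ) T, ∀ v, Differentiable ℝ (fun x => F t x v)) ∧
  ContinuousOn (fun p : ℝ × (Fin n → ℝ) × (Fin n → ℝ) =>
      fderiv ℝ (fun x => F p.1 x p.2.2) p.2.1)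
    (Icc (0:ℝ) T ×ˢ (univ : Set ((Fin n → ℝ) × (Fin n → ℝ)))) ∧
  (∀ t ∈ Icc (0:ℝ) T, ∀ x, Differentiable ℝ (fun v => F t x v)) ∧
  ContinuousOn (fun p : ℝ × (Fin n → ℝ) × (Fin n → ℝ) =>
      fderiv ℝ (fun v => F p.1 p.2.1 v) p.2.2)
    (Icc (0:ℝ) T ×ˢ (univ : Set ((Fin n → ℝ) × (Fin n → ℝ)))) ∧
  (∀ x : Fin n → ℝ, ∀ t ∈ Icc (0:ℝ) T,
    DifferentiableWithinAt ℝ (fun s => η s x) (Icc (0:ℝ) T) t) ∧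
  ContinuousOn (fun p : ℝ × (Fin n → ℝ) =>
      derivWithin (fun s => η s p.2) (Icc (0:ℝ) T) p.1)
    (Icc (0:ℝ) T ×ˢ (univ : Set (Fin n → ℝ))) ∧
  (∀ t ∈ Icc (0:ℝ) T, Differentiable ℝ (η t)) ∧
  ContinuousOn (fun p : ℝ × (Fin n → ℝ) => fderiv ℝ (η p.1) p.2)
    (Icc (0:ℝ) T ×ˢ (univ : Set (Fin n → ℝ)))

/-- `|η| + [η]ˣ_β + [η]ᵗ_{β/2} ≤ C₁`. -/
def EtaHolderBound {n : ℕ} (T β C₁ : ℝ) (η : ℝ → (Fin n → ℝ) → Fin n → ℝ) : Prop :=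
  ∃ a b c : ℝ, 0 ≤ a ∧ 0 ≤ b ∧ 0 ≤ c ∧ a + b + c ≤ C₁ ∧
    (∀ t ∈ Icc (0:ℝ) T, ∀ x, ‖η t x‖ ≤ a) ∧
    (∀ t ∈ Icc (0:ℝ) T, ∀ x x', 0 < ‖x - x'‖ → ‖x - x'‖ < 1 →
      ‖η t x - η t x'‖ ≤ b * ‖x - x'‖ ^ β) ∧
    (∀ t ∈ Icc (0:ℝ) T, ∀ t' ∈ Icc (0:ℝ) T, ∀ x,
      ‖η t x - η t' x‖ ≤ c * |t - t'| ^ (β / 2))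

/-- `[F]ᵗ_{β/2} + [F]ˣ_β + [F]ʸ_β ≤ C₂ (1+|y|)`. -/
def FHolderBound {n : ℕ} (T β C₂ : ℝ)
    (F : ℝ → (Fin n → ℝ) → (Fin n → ℝ) → Fin n → ℝ) : Prop :=
  ∃ a b c : ℝ, 0 ≤ a ∧ 0 ≤ b ∧ 0 ≤ c ∧ a + b + c ≤ C₂ ∧
    (∀ t ∈ Icc (0:ℝ) T, ∀ t' ∈ Icc (0:ℝ) T, ∀ x v,
      ‖F t x v - F t' x v‖ ≤ a * (1 + ‖v‖) * |t - t'| ^ (β / 2)) ∧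
    (∀ t ∈ Icc (0:ℝ) T, ∀ x x' v, 0 < ‖x - x'‖ → ‖x - x'‖ < 1 →
      ‖F t x v - F t x' v‖ ≤ b * (1 + ‖v‖) * ‖x - x'‖ ^ β) ∧
    (∀ t ∈ Icc (0:ℝ) T, ∀ x v v', 0 < ‖v - v'‖ → ‖v - v'‖ < 1 →
      ‖F t x v - F t x v'‖ ≤ c * (1 + ‖v‖) * ‖v - v'‖ ^ β)

/-- `y` is a classical bounded solution on `[0,T]×ℝⁿ` of
`∂_t y = ν Δy − ((η+y),∇)y + F(t,x,y)`, `y(0,·) = h`. -/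
def BurgersSol {n : ℕ} (T ν : ℝ) (η : ℝ → (Fin n → ℝ) → Fin n → ℝ)
    (F : ℝ → (Fin n → ℝ) → (Fin n → ℝ) → Fin n → ℝ)
    (h : (Fin n → ℝ) → Fin n → ℝ) (y : ℝ → (Fin n → ℝ) → Fin n → ℝ) : Prop :=
  C12b T y ∧
  (∀ t ∈ Icc (0:ℝ) T, ∀ x, derivWithin (fun s => y s x) (Icc (0:ℝ) T) t =
    ν • lap (y t) x - dirDeriv (y t) x (η t x + y t x) + F t x (y t x)) ∧
  (∀ x, y 0 x = h x)


/-!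
Along a solution, the energy `w = y ⬝ᵥ y` satisfies the scalar inequality
`∂ₜw ≤ ν Δw - (η + y)·∇w + 3nĈ (1 + w)`: the transport term is itself a gradient of `w`,
`Δw = 2 y ⬝ᵥ Δy + 2 |∇y|² ≥ 2 y ⬝ᵥ Δy`, and `2 y ⬝ᵥ F ≤ 3nĈ (1 + w)` by the linear growth of `F`.
The weak maximum principle on `[0,T] × ℝⁿ` then gives `1 + w ≤ e^{3nĈt} (1 + n M₁²)`, a bound in
which `ν` and the drift no longer appear. The maximum principle is proved by penalization:
`e^{-Ct} (1 + w) - ε e^{μt} (1 + |x|²)` attains its maximum, at `t = 0` because at a later time the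
first- and second-order conditions in `x` and the sign of the time derivative contradict the
inequality once `μ = 2nν + nU² + 1`; then `ε → 0`.
-/

open Filter Topology Matrix Real

section SecondOrder

variable {E F : Type*} [NormedAddCommGroup E] [NormedSpace ℝ E] [NormedAddCommGroup F]
  [NormedSpace ℝ F]

theorem ContDiff.differentiable_fderiv_apply {f : E → F} (hf : ContDiff ℝ 2 f) (v : E) :
    Differentiable ℝ (fun z => fderiv ℝ f z v) :=
  ((hf.fderiv_right (m := 1) (by norm_num)).differentiable one_ne_zero).clm_apply
    (differentiable_const v)

theorem IsLocalMax.deriv_deriv_nonpos {g : ℝ → ℝ} {a : ℝ} (h : IsLocalMax g a)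
    (hg : ContinuousAt g a) : deriv (deriv g) a ≤ 0 := by
  by_contra! hpos
  have hmin := isLocalMin_of_deriv_deriv_pos hpos h.deriv_eq_zero hg
  have hconst : g =ᶠ[𝓝 a] fun _ => g a :=
    (h.and hmin).mono fun _ hy => le_antisymm hy.1 hy.2
  have : deriv (deriv g) a = 0 := by simp [hconst.deriv.deriv_eq]
  linarith

theorem deriv_deriv_comp_add_smul {f : E → ℝ} (hf : ContDiff ℝ 2 f) (x v : E) :
    deriv (deriv fun s : ℝ => f (x + s • v)) 0 = fderiv ℝ (fun z => fderiv ℝ f z v) x v := by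
  have hline (s : ℝ) : HasDerivAt (fun s : ℝ => x + s • v) v s := by
    simpa using ((hasDerivAt_id s).smul_const v).const_add x
  have hfirst : deriv (fun s : ℝ => f (x + s • v)) = fun s => fderiv ℝ f (x + s • v) v := by
    funext s
    exact ((hf.differentiable (by norm_num) _).hasFDerivAt.comp_hasDerivAt s (hline s)).deriv
  have hsecond := (hf.differentiable_fderiv_apply v _).hasFDerivAt.comp_hasDerivAt 0 (hline 0)
  rw [zero_smul, add_zero] at hsecond
  rw [hfirst]
  exact hsecond.deriv

theorem IsLocalMax.fderiv_fderiv_apply_nonpos {f : E → ℝ} {x : E} (hf : ContDiff ℝ 2 f)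
    (h : IsLocalMax f x) (v : E) : fderiv ℝ (fun z => fderiv ℝ f z v) x v ≤ 0 := by
  have hline : Continuous fun s : ℝ => x + s • v := by fun_prop
  rw [← deriv_deriv_comp_add_smul hf]
  refine IsLocalMax.deriv_deriv_nonpos ?_ (hf.continuous.comp hline).continuousAt
  exact IsLocalMax.comp_continuous (by simpa using h) hline.continuousAt

end SecondOrder

section DotProduct

variable {E : Type*} [NormedAddCommGroup E] [NormedSpace ℝ E] {ι : Type*} [Fintype ι]

theorem dotProduct_self_nonneg (v : ι → ℝ) : 0 ≤ v ⬝ᵥ v :=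
  dotProduct_self_star_nonneg v

theorem dotProduct_le_card_mul_norm_mul_norm (v w : ι → ℝ) :
    v ⬝ᵥ w ≤ Fintype.card ι * (‖v‖ * ‖w‖) := by
  calc v ⬝ᵥ w ≤ ∑ _i : ι, ‖v‖ * ‖w‖ := Finset.sum_le_sum fun i _ =>
        (le_abs_self _).trans <| by
          rw [abs_mul]
          exact mul_le_mul (norm_le_pi_norm v i) (norm_le_pi_norm w i) (abs_nonneg _)
            (norm_nonneg _)
    _ = Fintype.card ι * (‖v‖ * ‖w‖) := by simp

theorem dotProduct_self_le_of_norm_le {v : ι → ℝ} {M : ℝ} (hv : ‖v‖ ≤ M) :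
    v ⬝ᵥ v ≤ Fintype.card ι * M ^ 2 := by
  have := dotProduct_le_card_mul_norm_mul_norm v v
  have : ‖v‖ * ‖v‖ ≤ M ^ 2 := by nlinarith [norm_nonneg v]
  nlinarith [(Fintype.card ι).cast_nonneg (α := ℝ)]

theorem norm_sq_le_dotProduct_self (v : ι → ℝ) : ‖v‖ ^ 2 ≤ v ⬝ᵥ v := by
  have hnorm : ‖v‖ ≤ √(v ⬝ᵥ v) := (pi_norm_le_iff_of_nonneg (sqrt_nonneg _)).2 fun i =>
    abs_le_sqrt <| by
      simpa [sq, dotProduct] using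
        Finset.single_le_sum (fun j _ => mul_self_nonneg (v j)) (Finset.mem_univ i)
  calc ‖v‖ ^ 2 ≤ √(v ⬝ᵥ v) ^ 2 := pow_le_pow_left₀ (norm_nonneg v) hnorm 2
    _ = v ⬝ᵥ v := sq_sqrt (dotProduct_self_nonneg v)

theorem two_mul_dotProduct_le_add (v w : ι → ℝ) : 2 * (v ⬝ᵥ w) ≤ v ⬝ᵥ v + w ⬝ᵥ w := by
  have := dotProduct_self_nonneg (v - w)
  simp only [sub_dotProduct, dotProduct_sub, dotProduct_comm w v] at this
  linarith

theorem two_mul_dotProduct_le_of_norm_le {Ĉ : ℝ} {v f : ι → ℝ}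
    (hf : ‖f‖ ≤ Ĉ * (1 + ‖v‖)) :
    2 * (v ⬝ᵥ f) ≤ 3 * Fintype.card ι * Ĉ * (1 + v ⬝ᵥ v) := by
  have hĈ : 0 ≤ Ĉ := nonneg_of_mul_nonneg_left ((norm_nonneg f).trans hf) (by positivity)
  have hvf := dotProduct_le_card_mul_norm_mul_norm v f
  have hv := norm_sq_le_dotProduct_self v
  have hcard : (0 : ℝ) ≤ Fintype.card ι := Nat.cast_nonneg _
  have : ‖v‖ * ‖f‖ ≤ ‖v‖ * (Ĉ * (1 + ‖v‖)) := mul_le_mul_of_nonneg_left hf (norm_nonneg v)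
  nlinarith [mul_le_mul_of_nonneg_left this hcard, sq_nonneg (‖v‖ - 1),
    mul_nonneg hcard hĈ, mul_nonneg (mul_nonneg hcard hĈ) (sq_nonneg (‖v‖ - 1)),
    mul_le_mul_of_nonneg_left hv (mul_nonneg hcard hĈ)]

theorem HasFDerivAt.dotProduct {φ ψ : E → ι → ℝ} {φ' ψ' : E →L[ℝ] ι → ℝ} {x : E}
    (hφ : HasFDerivAt φ φ' x) (hψ : HasFDerivAt ψ ψ' x) :
    HasFDerivAt (fun z => φ z ⬝ᵥ ψ z)
      (∑ i, (φ x i • (ContinuousLinearMap.proj i ∘L ψ') +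
        ψ x i • (ContinuousLinearMap.proj i ∘L φ'))) x :=
  HasFDerivAt.fun_sum fun i _ => (hasFDerivAt_pi'.1 hφ i).fun_mul (hasFDerivAt_pi'.1 hψ i)

theorem fderiv_dotProduct_apply {φ ψ : E → ι → ℝ} {x : E} (hφ : DifferentiableAt ℝ φ x)
    (hψ : DifferentiableAt ℝ ψ x) (v : E) :
    fderiv ℝ (fun z => φ z ⬝ᵥ ψ z) x v = fderiv ℝ φ x v ⬝ᵥ ψ x + φ x ⬝ᵥ fderiv ℝ ψ x v := by
  rw [(hφ.hasFDerivAt.dotProduct hψ.hasFDerivAt).fderiv]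
  simp [dotProduct, Finset.sum_add_distrib, mul_comm, add_comm]

theorem ContDiff.dotProduct {k : WithTop ℕ∞} {φ ψ : E → ι → ℝ} (hφ : ContDiff ℝ k φ)
    (hψ : ContDiff ℝ k ψ) : ContDiff ℝ k fun z => φ z ⬝ᵥ ψ z :=
  ContDiff.sum fun i _ => (contDiff_pi.1 hφ i).mul (contDiff_pi.1 hψ i)

theorem HasDerivWithinAt.dotProduct_self {φ : ℝ → ι → ℝ} {φ' : ι → ℝ} {s : Set ℝ} {t : ℝ}
    (hφ : HasDerivWithinAt φ φ' s t) :
    HasDerivWithinAt (fun r => φ r ⬝ᵥ φ r) (2 * (φ t ⬝ᵥ φ')) s t := by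
  have h := HasDerivWithinAt.fun_sum (u := Finset.univ) fun i _ =>
    (hasDerivWithinAt_pi.1 hφ i).fun_mul (hasDerivWithinAt_pi.1 hφ i)
  refine h.congr_deriv ?_
  simp only [dotProduct, Finset.mul_sum]
  exact Finset.sum_congr rfl fun i _ => by ring

theorem fderiv_fderiv_dotProduct_self_apply {φ : E → ι → ℝ} (hφ : ContDiff ℝ 2 φ) (x v : E) :
    fderiv ℝ (fun z => fderiv ℝ (fun w => φ w ⬝ᵥ φ w) z v) x v =
      2 * (fderiv ℝ φ x v ⬝ᵥ fderiv ℝ φ x v + φ x ⬝ᵥ fderiv ℝ (fun z => fderiv ℝ φ z v) x v) := by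
  have hd : Differentiable ℝ φ := hφ.differentiable (by norm_num)
  have hd' := hφ.differentiable_fderiv_apply v
  have hfirst : (fun z => fderiv ℝ (fun w => φ w ⬝ᵥ φ w) z v) =
      fun z => 2 * (φ z ⬝ᵥ fderiv ℝ φ z v) := by
    funext z
    rw [fderiv_dotProduct_apply (hd z) (hd z), dotProduct_comm]
    ring
  rw [hfirst, fderiv_const_mul ((hd x).hasFDerivAt.dotProduct (hd' x).hasFDerivAt).differentiableAt,
    _root_.smul_apply, fderiv_dotProduct_apply (hd x) (hd' x), smul_eq_mul]

end DotProduct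

theorem IsMaxOn.hasDerivWithinAt_Icc_nonneg {f : ℝ → ℝ} {a b t d : ℝ}
    (h : IsMaxOn f (Icc a b) t) (ht : t ∈ Ioc a b) (hf : HasDerivWithinAt f d (Icc a b) t) :
    0 ≤ d := by
  have hseg : segment ℝ t a ⊆ Icc a b := (convex_Icc a b).segment_subset
    ⟨ht.1.le, ht.2⟩ (left_mem_Icc.2 (ht.1.le.trans ht.2))
  have := h.localize.hasFDerivWithinAt_nonpos hf.hasFDerivWithinAt
    (sub_mem_posTangentConeAt_of_segment_subset hseg)
  rw [ContinuousLinearMap.toSpanSingleton_apply, smul_eq_mul] at this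
  nlinarith [ht.1]

theorem exists_isMaxOn_of_le_sub_dotProduct {ι : Type*} [Fintype ι] {a b A δ : ℝ}
    (hab : a ≤ b) (hδ : 0 < δ) {F : ℝ × (ι → ℝ) → ℝ}
    (hF : ContinuousOn F (Icc a b ×ˢ univ))
    (hle : ∀ t ∈ Icc a b, ∀ x, F (t, x) ≤ A - δ * (x ⬝ᵥ x)) :
    ∃ p ∈ Icc a b ×ˢ univ, IsMaxOn F (Icc a b ×ˢ univ) p := by
  have h₀ : ((a, 0) : ℝ × (ι → ℝ)) ∈ Icc a b ×ˢ univ := ⟨left_mem_Icc.2 hab, trivial⟩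
  refine hF.exists_isMaxOn' (isClosed_Icc.prod isClosed_univ) h₀ ?_
  set R := √(|A - F (a, 0)| / δ)
  refine (hasBasis_cocompact.inf_principal _).eventually_iff.2
    ⟨Icc a b ×ˢ Metric.closedBall 0 R, isCompact_Icc.prod (isCompact_closedBall _ _), ?_⟩
  rintro ⟨t, x⟩ ⟨hK, ht, -⟩
  have hR : R < ‖x‖ := by
    by_contra! hx
    exact hK ⟨ht, mem_closedBall_zero_iff.2 hx⟩
  have hRsq : |A - F (a, 0)| / δ < ‖x‖ ^ 2 :=
    (sqrt_lt' (hR.trans_le' (sqrt_nonneg _))).1 hR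
  have hx := norm_sq_le_dotProduct_self x
  have := hle t ht x
  rw [div_lt_iff₀ hδ] at hRsq
  nlinarith [le_abs_self (A - F (a, 0))]

noncomputable def scalarLap {n : ℕ} (f : (Fin n → ℝ) → ℝ) (x : Fin n → ℝ) : ℝ :=
  ∑ j : Fin n, fderiv ℝ (fun z => fderiv ℝ f z (Pi.single j 1)) x (Pi.single j 1)

section ScalarLap

variable {n : ℕ} {f g : (Fin n → ℝ) → ℝ} {x : Fin n → ℝ}

theorem IsLocalMax.scalarLap_nonpos (hf : ContDiff ℝ 2 f) (h : IsLocalMax f x) :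
    scalarLap f x ≤ 0 :=
  Finset.sum_nonpos fun _ _ => h.fderiv_fderiv_apply_nonpos hf _

theorem scalarLap_sub_const_mul (hf : ContDiff ℝ 2 f) (hg : ContDiff ℝ 2 g) (c : ℝ)
    (x : Fin n → ℝ) :
    scalarLap (fun z => f z - c * g z) x = scalarLap f x - c * scalarLap g x := by
  have hf1 : Differentiable ℝ f := hf.differentiable (by norm_num)
  have hg1 : Differentiable ℝ g := hg.differentiable (by norm_num)
  have hfirst (v : Fin n → ℝ) : (fun z => fderiv ℝ (fun w => f w - c * g w) z v) =
      fun z => fderiv ℝ f z v - c * fderiv ℝ g z v := by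
    funext z
    rw [fderiv_fun_sub (hf1 z) ((hg1 z).const_mul c), fderiv_const_mul (hg1 z)]
    rfl
  simp only [scalarLap, hfirst]
  rw [Finset.mul_sum, ← Finset.sum_sub_distrib]
  refine Finset.sum_congr rfl fun j _ => ?_
  rw [fderiv_fun_sub (hf.differentiable_fderiv_apply _ x)
    ((hg.differentiable_fderiv_apply _ x).const_mul c),
    fderiv_const_mul (hg.differentiable_fderiv_apply _ x)]
  rfl

theorem scalarLap_dotProduct_self {φ : (Fin n → ℝ) → Fin n → ℝ} (hφ : ContDiff ℝ 2 φ)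
    (x : Fin n → ℝ) :
    scalarLap (fun z => φ z ⬝ᵥ φ z) x =
      2 * (∑ j, fderiv ℝ φ x (Pi.single j 1) ⬝ᵥ fderiv ℝ φ x (Pi.single j 1) +
        φ x ⬝ᵥ lap φ x) := by
  simp only [scalarLap, lap, fderiv_fderiv_dotProduct_self_apply hφ, dotProduct_sum,
    ← Finset.mul_sum, Finset.sum_add_distrib]

theorem two_mul_dotProduct_lap_le_scalarLap {φ : (Fin n → ℝ) → Fin n → ℝ}
    (hφ : ContDiff ℝ 2 φ) (x : Fin n → ℝ) :
    2 * (φ x ⬝ᵥ lap φ x) ≤ scalarLap (fun z => φ z ⬝ᵥ φ z) x := by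
  rw [scalarLap_dotProduct_self hφ]
  have : 0 ≤ ∑ j, fderiv ℝ φ x (Pi.single j 1) ⬝ᵥ fderiv ℝ φ x (Pi.single j 1) :=
    Finset.sum_nonneg fun _ _ => dotProduct_self_nonneg _
  linarith

theorem scalarLap_dotProduct_self_id (x : Fin n → ℝ) :
    scalarLap (fun z : Fin n → ℝ => z ⬝ᵥ z) x = 2 * n := by
  have := scalarLap_dotProduct_self (φ := id) contDiff_id x
  simp only [id] at this
  rw [this]
  simp [lap]

theorem IsLocalMax.fderiv_apply_eq_of_sub_dotProduct {c : ℝ} (hf : DifferentiableAt ℝ f x)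
    (h : IsLocalMax (fun z => f z - c * (z ⬝ᵥ z)) x) (v : Fin n → ℝ) :
    fderiv ℝ f x v = 2 * c * (x ⬝ᵥ v) := by
  have hQ : DifferentiableAt ℝ (fun z : Fin n → ℝ => z ⬝ᵥ z) x :=
    (hasFDerivAt_id x).dotProduct (hasFDerivAt_id x) |>.differentiableAt
  have h0 := congrArg (· v) h.fderiv_eq_zero
  rw [fderiv_fun_sub hf (hQ.const_mul c), fderiv_const_mul hQ] at h0
  simp only [_root_.sub_apply, _root_.smul_apply, smul_eq_mul, _root_.zero_apply] at h0
  rw [fderiv_dotProduct_apply differentiableAt_id differentiableAt_id, fderiv_fun_id] at h0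
  simp only [ContinuousLinearMap.id_apply, dotProduct_comm v x] at h0
  linarith

theorem IsLocalMax.scalarLap_le_of_sub_dotProduct {c : ℝ} (hf : ContDiff ℝ 2 f)
    (h : IsLocalMax (fun z => f z - c * (z ⬝ᵥ z)) x) : scalarLap f x ≤ 2 * n * c := by
  have hQ : ContDiff ℝ 2 fun z : Fin n → ℝ => z ⬝ᵥ z := contDiff_id.dotProduct contDiff_id
  have := h.scalarLap_nonpos (hf.sub (contDiff_const.mul hQ))
  rw [scalarLap_sub_const_mul hf hQ, scalarLap_dotProduct_self_id] at this
  linarith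

end ScalarLap

section MaxPrinciple

variable {n : ℕ}

structure IsSubsolution (T ν C : ℝ) (b : ℝ → (Fin n → ℝ) → Fin n → ℝ)
    (w w' : ℝ → (Fin n → ℝ) → ℝ) : Prop where
  continuousOn : ContinuousOn (fun p : ℝ × (Fin n → ℝ) => w p.1 p.2) (Icc 0 T ×ˢ univ)
  bddAbove : ∃ B, ∀ t ∈ Icc 0 T, ∀ x, w t x ≤ B
  contDiff : ∀ t ∈ Ioc 0 T, ContDiff ℝ 2 (w t)
  hasDerivWithinAt : ∀ t ∈ Ioc 0 T, ∀ x,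
    HasDerivWithinAt (fun s => w s x) (w' t x) (Icc 0 T) t
  le : ∀ t ∈ Ioc 0 T, ∀ x,
    w' t x ≤ ν * scalarLap (w t) x + fderiv ℝ (w t) x (b t x) + C * (1 + w t x)

noncomputable def penalized (C μ ε : ℝ) (w : ℝ → (Fin n → ℝ) → ℝ) (p : ℝ × (Fin n → ℝ)) :
    ℝ :=
  exp (-(C * p.1)) * (1 + w p.1 p.2) - ε * exp (μ * p.1) * (1 + p.2 ⬝ᵥ p.2)

variable {T ν C U : ℝ} {b : ℝ → (Fin n → ℝ) → Fin n → ℝ} {w w' : ℝ → (Fin n → ℝ) → ℝ}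

theorem hasDerivWithinAt_penalized {μ ε d t₀ : ℝ} {s : Set ℝ} {x₀ : Fin n → ℝ}
    (hw : HasDerivWithinAt (fun t => w t x₀) d s t₀) :
    HasDerivWithinAt (fun t => penalized C μ ε w (t, x₀))
      (exp (-(C * t₀)) * (d - C * (1 + w t₀ x₀)) - ε * exp (μ * t₀) * (μ * (1 + x₀ ⬝ᵥ x₀)))
      s t₀ := by
  have hdecay : HasDerivAt (fun t => exp (-(C * t))) (exp (-(C * t₀)) * (-C)) t₀ := by
    simpa using ((hasDerivAt_id t₀).const_mul C).neg.exp
  have hgrowth : HasDerivAt (fun t => exp (μ * t)) (exp (μ * t₀) * μ) t₀ := by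
    simpa using ((hasDerivAt_id t₀).const_mul μ).exp
  refine ((hdecay.hasDerivWithinAt.mul (hw.const_add 1)).sub
    ((hgrowth.const_mul ε).mul_const (1 + x₀ ⬝ᵥ x₀)).hasDerivWithinAt).congr_deriv ?_
  ring

theorem IsSubsolution.not_isMaxOn_penalized (hw : IsSubsolution T ν C b w w') (hν : 0 ≤ ν)
    (hb : ∀ t ∈ Ioc 0 T, ∀ x, ‖b t x‖ ≤ U) {ε t₀ : ℝ} (hε : 0 < ε) (ht₀ : t₀ ∈ Ioc 0 T)
    (x₀ : Fin n → ℝ) :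
    ¬ IsMaxOn (penalized C (2 * n * ν + n * U ^ 2 + 1) ε w) (Icc 0 T ×ˢ univ) (t₀, x₀) := by
  intro hmax
  set μ := 2 * n * ν + n * U ^ 2 + 1
  set a := exp (-(C * t₀))
  set c := ε * exp ((μ + C) * t₀)
  have ha : 0 < a := exp_pos _
  have hc : 0 < c := by positivity
  have hac : ε * exp (μ * t₀) = a * c :=
    calc ε * exp (μ * t₀) = ε * exp (-(C * t₀) + (μ + C) * t₀) := by
          rw [show -(C * t₀) + (μ + C) * t₀ = μ * t₀ by ring]
      _ = a * c := by rw [exp_add]; ring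
  have hloc : IsLocalMax (fun z => w t₀ z - c * (z ⬝ᵥ z)) x₀ := Eventually.of_forall fun z => by
    have := hmax (show (t₀, z) ∈ Icc 0 T ×ˢ univ from ⟨Ioc_subset_Icc_self ht₀, trivial⟩)
    simp only [penalized, mem_ofPred_eq, hac] at this
    have : a * (w t₀ z - c * (z ⬝ᵥ z)) ≤ a * (w t₀ x₀ - c * (x₀ ⬝ᵥ x₀)) := by linarith
    exact le_of_mul_le_mul_left this ha
  have hgrad := hloc.fderiv_apply_eq_of_sub_dotProduct
    ((hw.contDiff t₀ ht₀).differentiable (by norm_num) x₀) (b t₀ x₀)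
  have hlap := hloc.scalarLap_le_of_sub_dotProduct (hw.contDiff t₀ ht₀)
  have hD := hasDerivWithinAt_penalized (C := C) (μ := μ) (ε := ε)
    (hw.hasDerivWithinAt t₀ ht₀ x₀)
  have hmax_time : IsMaxOn (fun s => penalized C μ ε w (s, x₀)) (Icc 0 T) t₀ :=
    fun s hs => hmax ⟨hs, trivial⟩
  have htime := hmax_time.hasDerivWithinAt_Icc_nonneg ht₀ hD
  have hdrift : 2 * (x₀ ⬝ᵥ b t₀ x₀) ≤ x₀ ⬝ᵥ x₀ + n * U ^ 2 := by
    have := dotProduct_self_le_of_norm_le (hb t₀ ht₀ x₀)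
    simp only [Fintype.card_fin] at this
    linarith [two_mul_dotProduct_le_add x₀ (b t₀ x₀)]
  have hsub := hw.le t₀ ht₀ x₀
  rw [hgrad] at hsub
  rw [hac, mul_assoc, ← mul_sub] at htime
  have hQ : 0 ≤ x₀ ⬝ᵥ x₀ := dotProduct_self_nonneg x₀
  have := nonneg_of_mul_nonneg_right htime ha
  -- `c μ (1 + |x₀|²) ≤ ∂ₜw - C (1 + w) ≤ c (2nν + |x₀|² + nU²)`, impossible for this `μ`.
  nlinarith [mul_le_mul_of_nonneg_left hlap hν, mul_le_mul_of_nonneg_left hdrift hc.le,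
    mul_nonneg hc.le (mul_nonneg (by positivity : (0:ℝ) ≤ 2 * n * ν + n * U ^ 2) hQ)]

theorem IsSubsolution.penalized_le (hw : IsSubsolution T ν C b w w') (hν : 0 ≤ ν) (hC : 0 ≤ C)
    (hb : ∀ t ∈ Ioc 0 T, ∀ x, ‖b t x‖ ≤ U) {K : ℝ} (hinit : ∀ x, w 0 x ≤ K) {ε t : ℝ}
    (hε : 0 < ε) (ht : t ∈ Icc 0 T) (x : Fin n → ℝ) :
    penalized C (2 * n * ν + n * U ^ 2 + 1) ε w (t, x) ≤ 1 + K := by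
  set μ := 2 * n * ν + n * U ^ 2 + 1
  obtain ⟨B, hB⟩ := hw.bddAbove
  have hcont : ContinuousOn (penalized C μ ε w) (Icc 0 T ×ˢ univ) := by
    refine ((continuous_exp.comp (by fun_prop)).continuousOn.mul
      (continuousOn_const.add hw.continuousOn)).sub (Continuous.continuousOn ?_)
    unfold dotProduct
    fun_prop
  have hcoercive : ∀ s ∈ Icc 0 T, ∀ z, penalized C μ ε w (s, z) ≤ |1 + B| - ε * (z ⬝ᵥ z) := by
    intro s hs z
    have hdecay : exp (-(C * s)) ≤ 1 := exp_le_one_iff.2 (by nlinarith [hs.1])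
    have hgrowth : 1 ≤ exp (μ * s) := one_le_exp (by have := hs.1; positivity)
    have hw1 : 1 + w s z ≤ |1 + B| := (add_le_add_right (hB s hs z) 1).trans (le_abs_self _)
    have hQ := dotProduct_self_nonneg z
    simp only [penalized]
    nlinarith [exp_pos (-(C * s)), abs_nonneg (1 + B),
      mul_le_mul_of_nonneg_left hw1 (exp_pos (-(C * s))).le,
      mul_le_mul_of_nonneg_left hgrowth (by positivity : 0 ≤ ε * (1 + z ⬝ᵥ z))]
  obtain ⟨⟨t₀, x₀⟩, ⟨ht₀, -⟩, hmax⟩ :=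
    exists_isMaxOn_of_le_sub_dotProduct (ht.1.trans ht.2) hε hcont hcoercive
  rcases ht₀.1.eq_or_lt with h0 | hpos
  · subst h0
    calc penalized C μ ε w (t, x) ≤ penalized C μ ε w (0, x₀) := hmax ⟨ht, trivial⟩
      _ ≤ 1 + K := by
        simp only [penalized, mul_zero, neg_zero, exp_zero, one_mul, mul_one]
        nlinarith [hinit x₀, dotProduct_self_nonneg x₀]
  · exact absurd hmax (hw.not_isMaxOn_penalized hν hb hε ⟨hpos, ht₀.2⟩ x₀)

theorem IsSubsolution.one_add_le_exp_mul (hw : IsSubsolution T ν C b w w') (hν : 0 ≤ ν)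
    (hC : 0 ≤ C) (hb : ∀ t ∈ Ioc 0 T, ∀ x, ‖b t x‖ ≤ U) {K : ℝ} (hinit : ∀ x, w 0 x ≤ K)
    {t : ℝ} (ht : t ∈ Icc 0 T) (x : Fin n → ℝ) :
    1 + w t x ≤ exp (C * t) * (1 + K) := by
  set P := exp ((2 * n * ν + n * U ^ 2 + 1) * t) * (1 + x ⬝ᵥ x)
  have hP : 0 < P := mul_pos (exp_pos _) (by linarith [dotProduct_self_nonneg x])
  have hweighted : exp (-(C * t)) * (1 + w t x) ≤ 1 + K := le_of_forall_pos_le_add fun δ hδ => by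
    have := hw.penalized_le hν hC hb hinit (div_pos hδ hP) ht x
    simp only [penalized] at this
    rw [mul_assoc (δ / P), div_mul_cancel₀ δ hP.ne'] at this
    linarith
  calc 1 + w t x = exp (C * t) * (exp (-(C * t)) * (1 + w t x)) := by
        rw [← mul_assoc, ← exp_add, add_neg_cancel, exp_zero, one_mul]
    _ ≤ exp (C * t) * (1 + K) := mul_le_mul_of_nonneg_left hweighted (exp_pos _).le

end MaxPrinciple

theorem BurgersSol.isSubsolution_dotProduct_self {n : ℕ} {T ν Ĉ : ℝ}
    {η : ℝ → (Fin n → ℝ) → Fin n → ℝ} {F : ℝ → (Fin n → ℝ) → (Fin n → ℝ) → Fin n → ℝ}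
    {h : (Fin n → ℝ) → Fin n → ℝ} {y : ℝ → (Fin n → ℝ) → Fin n → ℝ} (hν : 0 ≤ ν)
    (hF : ∀ t ∈ Icc 0 T, ∀ x v, ‖F t x v‖ ≤ Ĉ * (1 + ‖v‖)) (hy : BurgersSol T ν η F h y) :
    IsSubsolution T ν (3 * n * Ĉ) (fun t x => -(η t x + y t x)) (fun t x => y t x ⬝ᵥ y t x)
      (fun t x => 2 * (y t x ⬝ᵥ derivWithin (fun s => y s x) (Icc 0 T) t)) := by
  obtain ⟨⟨hcont, hsmooth, htime, -, -, -, M, hM⟩, hpde, -⟩ := hy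
  refine ⟨?_, ⟨n * M ^ 2, fun t ht x => ?_⟩, fun t ht => ?_, fun t ht x => ?_, fun t ht x => ?_⟩
  · exact (continuous_id.dotProduct continuous_id).comp_continuousOn hcont
  · simpa using dotProduct_self_le_of_norm_le (hM t ht x).1
  · exact (hsmooth t (Ioc_subset_Icc_self ht)).dotProduct (hsmooth t (Ioc_subset_Icc_self ht))
  · exact (htime x t (Ioc_subset_Icc_self ht)).hasDerivWithinAt.dotProduct_self
  · have ht' := Ioc_subset_Icc_self ht
    have hyt := hsmooth t ht'
    have hD := (hyt.differentiable (by norm_num)) x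
    have hlap := two_mul_dotProduct_lap_le_scalarLap hyt x
    have hdrift : fderiv ℝ (fun z => y t z ⬝ᵥ y t z) x (-(η t x + y t x)) =
        -(2 * (y t x ⬝ᵥ dirDeriv (y t) x (η t x + y t x))) := by
      rw [fderiv_dotProduct_apply hD hD, dotProduct_comm, map_neg, dotProduct_neg, dirDeriv]
      ring
    have hsource := two_mul_dotProduct_le_of_norm_le (hF t ht' x (y t x))
    simp only [Fintype.card_fin] at hsource
    simp only [hpde t ht' x, hdrift, dotProduct_add, dotProduct_sub, dotProduct_smul, smul_eq_mul]
    nlinarith [mul_le_mul_of_nonneg_left hlap hν]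

theorem stmt_3_general {n : ℕ} (Chat T M₁ : ℝ)
    (hChat : 0 < Chat) :
    ∃ M : ℝ, 0 < M ∧ ∀ ν : ℝ, 0 < ν → ∀ β ∈ Ioo (0:ℝ) 1,
    ∀ (h : (Fin n → ℝ) → Fin n → ℝ) (η : ℝ → (Fin n → ℝ) → Fin n → ℝ)
      (F : ℝ → (Fin n → ℝ) → (Fin n → ℝ) → Fin n → ℝ),
    Holder2b β h → QDataPartials T η F →
    (∃ C₁ : ℝ, EtaHolderBound T β C₁ η) →
    (∃ C₂ : ℝ, FHolderBound T β C₂ F) →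
    (∀ t ∈ Icc (0:ℝ) T, ∀ x v, ‖F t x v‖ ≤ Chat * (1 + ‖v‖)) →
    (∀ x, ‖h x‖ ≤ M₁) →
    ∀ y : ℝ → (Fin n → ℝ) → Fin n → ℝ, BurgersSol T ν η F h y →
    ∀ t ∈ Icc (0:ℝ) T, ∀ x, ‖y t x‖ ≤ M := by
  refine ⟨√(exp (3 * n * Chat * T) * (1 + n * M₁ ^ 2)), by positivity, ?_⟩
  intro ν hν β _ h η F _ _ hη _ hF hh y hy t ht x
  obtain ⟨-, a, -, -, -, -, -, -, hηa, -⟩ := hη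
  obtain ⟨My, hMy⟩ := hy.1.2.2.2.2.2.2
  have hdrift : ∀ t ∈ Ioc 0 T, ∀ x, ‖-(η t x + y t x)‖ ≤ a + My := fun t ht x => by
    rw [norm_neg]
    exact (norm_add_le _ _).trans
      (add_le_add (hηa t (Ioc_subset_Icc_self ht) x) (hMy t (Ioc_subset_Icc_self ht) x).1)
  have hinit : ∀ x, y 0 x ⬝ᵥ y 0 x ≤ n * M₁ ^ 2 := fun x => by
    simpa [hy.2.2 x] using dotProduct_self_le_of_norm_le (hh x)
  have henergy := (hy.isSubsolution_dotProduct_self hν.le hF).one_add_le_exp_mul hν.le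
    (by positivity) hdrift hinit ht x
  have hgrowth : exp (3 * n * Chat * t) ≤ exp (3 * n * Chat * T) :=
    exp_le_exp.2 (mul_le_mul_of_nonneg_left ht.2 (by positivity))
  refine le_sqrt_of_sq_le ?_
  nlinarith [norm_sq_le_dotProduct_self (y t x), mul_le_mul_of_nonneg_right hgrowth
    (by positivity : (0 : ℝ) ≤ 1 + n * M₁ ^ 2)]

/-- A priori sup bound for solutions, depending only on `Ĉ`, `T`, `M₁` and in
particular independent of the viscosity `ν` (Corollary `cor1`, sup bound). -/
theorem stmt_3 {n : ℕ} (hn : 1 ≤ n) (Chat T M₁ : ℝ)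
    (hChat : 0 < Chat) (hT : 0 < T) (hM₁ : 0 < M₁) :
    ∃ M : ℝ, 0 < M ∧ ∀ ν : ℝ, 0 < ν → ∀ β ∈ Ioo (0:ℝ) 1,
    ∀ (h : (Fin n → ℝ) → Fin n → ℝ) (η : ℝ → (Fin n → ℝ) → Fin n → ℝ)
      (F : ℝ → (Fin n → ℝ) → (Fin n → ℝ) → Fin n → ℝ),
    Holder2b β h → QDataPartials T η F →
    (∃ C₁ : ℝ, EtaHolderBound T β C₁ η) →
    (∃ C₂ : ℝ, FHolderBound T β C₂ F) →
    (∀ t ∈ Icc (0:ℝ) T, ∀ x v, ‖F t x v‖ ≤ Chat * (1 + ‖v‖)) →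
    (∀ x, ‖h x‖ ≤ M₁) →
    ∀ y : ℝ → (Fin n → ℝ) → Fin n → ℝ, BurgersSol T ν η F h y →
    ∀ t ∈ Icc (0:ℝ) T, ∀ x, ‖y t x‖ ≤ M :=
  stmt_3_general Chat T M₁ hChat
end

section
/- Let η̄ : [0,T]×ℝⁿ → ℝⁿ, F̄ : [0,T]×ℝⁿ×ℝⁿ → ℝⁿ and h : ℝⁿ → ℝⁿ be continuous and satisfy, for some K > 0 and all arguments, |η̄(t,x)−η̄(t,x')| ≤ K|x−x'|, |h(x)−h(x')| ≤ K|x−x'|, and |F̄(t,x,y)−F̄(t,x',y')| ≤ K(|x−x'|+|y−y'|). Then there exists a constant γ_K > 0, depending only on K, such that for every τ ∈ [0,T] with T−τ ≤ γ_K and every x ∈ ℝⁿ, there exists a unique pair of continuous functions X, Y : [τ,T] → ℝⁿ satisfying the forward–backward system X_t = x − ∫_τ^t (η̄(s,X_s) + Y_s) ds and Y_t = h(X_T) + ∫_t^T F̄(s,X_s,Y_s) ds for all t ∈ [τ,T]. -/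
open Set MeasureTheory intervalIntegral

/-- The deterministic, inviscid forward–backward system on `[τ,T]` with data
`(η̄, F̄, h)` and initial point `x`. -/
def FBSol {n : ℕ} (T τ : ℝ) (ηb : ℝ → (Fin n → ℝ) → Fin n → ℝ)
    (Fb : ℝ → (Fin n → ℝ) → (Fin n → ℝ) → Fin n → ℝ)
    (h : (Fin n → ℝ) → Fin n → ℝ) (x : Fin n → ℝ)
    (X Y : ℝ → Fin n → ℝ) : Prop :=
  ContinuousOn X (Icc τ T) ∧ ContinuousOn Y (Icc τ T) ∧
  (∀ t ∈ Icc τ T, X t = x - ∫ s in τ..t, (ηb s (X s) + Y s)) ∧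
  (∀ t ∈ Icc τ T, Y t = h (X T) + ∫ s in t..T, Fb s (X s) (Y s))

/-!
Solutions are exactly the fixed points of the Picard map `Φ` on `C([τ,T], E × E)` with the sup
metric. `Φ` itself need not contract: the terminal value `h (X T)` passes the full Lipschitz
constant of `h` on to `Y`. But every other term is an integral over an interval of length
`δ = T - τ`, so after one application of `Φ` the `X`-components are already `O(δ)`-close, and
`Φ ∘ Φ` is a `1/2`-contraction as soon as `10 (K + 1)² δ ≤ 1`. Banach's theorem for the iterate
gives existence and uniqueness.
-/

open ContinuousMap Function

theorem ContinuousMap.norm_fst_sub_le_dist {α E F : Type*} [TopologicalSpace α] [CompactSpace α]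
    [SeminormedAddCommGroup E] [SeminormedAddCommGroup F] (Z W : C(α, E × F)) (u : α) :
    ‖(Z u).1 - (W u).1‖ ≤ dist Z W :=
  (dist_eq_norm _ _).symm.trans_le <|
    ((le_max_left _ _).trans_eq Prod.dist_eq.symm).trans (dist_apply_le_dist u)

theorem ContinuousMap.norm_snd_sub_le_dist {α E F : Type*} [TopologicalSpace α] [CompactSpace α]
    [SeminormedAddCommGroup E] [SeminormedAddCommGroup F] (Z W : C(α, E × F)) (u : α) :
    ‖(Z u).2 - (W u).2‖ ≤ dist Z W :=
  (dist_eq_norm _ _).symm.trans_le <|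
    ((le_max_right _ _).trans_eq Prod.dist_eq.symm).trans (dist_apply_le_dist u)

section IntervalIntegral

variable {E : Type*} [NormedAddCommGroup E] [NormedSpace ℝ E] {a b : ℝ} [Fact (a ≤ b)]

theorem continuous_integral_IccExtendCM_from (g : C(Icc a b, E)) :
    Continuous fun t => ∫ s in a..t, IccExtendCM g s :=
  continuous_primitive (fun _ _ => (IccExtendCM g).continuous.intervalIntegrable _ _) a

theorem continuous_integral_IccExtendCM_to (g : C(Icc a b, E)) :
    Continuous fun t => ∫ s in t..b, IccExtendCM g s := by
  simp_rw [fun t => integral_symm (μ := volume) (f := IccExtendCM g) b t]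
  exact (continuous_primitive (fun _ _ => (IccExtendCM g).continuous.intervalIntegrable _ _) b).neg

theorem integral_IccExtendCM_congr {g : C(Icc a b, E)} {φ : ℝ → E} (hg : ∀ u, g u = φ u)
    {t₁ t₂ : ℝ} (h₁ : t₁ ∈ Icc a b) (h₂ : t₂ ∈ Icc a b) :
    ∫ s in t₁..t₂, IccExtendCM g s = ∫ s in t₁..t₂, φ s :=
  integral_congr fun s hs => by rw [IccExtendCM_of_mem (uIcc_subset_Icc h₁ h₂ hs), hg]

theorem norm_integral_IccExtendCM_sub_le {g g' : C(Icc a b, E)} {C : ℝ}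
    (hC : ∀ u, ‖g u - g' u‖ ≤ C) {t₁ t₂ : ℝ} (h₁ : t₁ ∈ Icc a b) (h₂ : t₂ ∈ Icc a b) :
    ‖(∫ s in t₁..t₂, IccExtendCM g s) - ∫ s in t₁..t₂, IccExtendCM g' s‖ ≤ C * (b - a) := by
  have hint (f : C(Icc a b, E)) := (IccExtendCM f).continuous.intervalIntegrable (μ := volume) t₁ t₂
  rw [← integral_sub (hint g) (hint g')]
  have hC0 : 0 ≤ C := (norm_nonneg _).trans (hC ⟨a, left_mem_Icc.2 Fact.out⟩)
  calc _ ≤ C * |t₂ - t₁| := norm_integral_le_of_norm_le_const fun s hs => by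
          have hs' := uIcc_subset_Icc h₁ h₂ (uIoc_subset_uIcc hs)
          simpa only [IccExtendCM_of_mem hs'] using hC ⟨s, hs'⟩
    _ ≤ C * (b - a) := by
          gcongr
          exact abs_sub_le_iff.2 ⟨by linarith [h₁.1, h₂.2], by linarith [h₁.2, h₂.1]⟩

end IntervalIntegral

structure IsLipschitzFBData {E : Type*} [NormedAddCommGroup E] (K τ T : ℝ) (η : ℝ → E → E)
    (F : ℝ → E → E → E) (h : E → E) : Prop where
  nonneg : 0 ≤ K
  continuousOn_η : ContinuousOn (fun p : ℝ × E => η p.1 p.2) (Icc τ T ×ˢ univ)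
  continuousOn_F : ContinuousOn (fun p : ℝ × E × E => F p.1 p.2.1 p.2.2) (Icc τ T ×ˢ univ)
  lipschitz_η : ∀ t ∈ Icc τ T, ∀ y y', ‖η t y - η t y'‖ ≤ K * ‖y - y'‖
  lipschitz_h : ∀ y y', ‖h y - h y'‖ ≤ K * ‖y - y'‖
  lipschitz_F : ∀ t ∈ Icc τ T, ∀ y y' v v', ‖F t y v - F t y' v'‖ ≤ K * (‖y - y'‖ + ‖v - v'‖)

namespace IsLipschitzFBData

section Picard

variable {E : Type*} [NormedAddCommGroup E] {K τ T : ℝ} {η : ℝ → E → E} {F : ℝ → E → E → E}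
  {h : E → E}
  (hd : IsLipschitzFBData K τ T η F h)

def forwardIntegrand (Z : C(Icc τ T, E × E)) : C(Icc τ T, E) :=
  ⟨fun u => η u (Z u).1 + (Z u).2,
    (hd.continuousOn_η.comp_continuous (continuous_subtype_val.prodMk (Z.continuous.fst))
      fun u => ⟨u.2, mem_univ _⟩).add Z.continuous.snd⟩

def backwardIntegrand (Z : C(Icc τ T, E × E)) : C(Icc τ T, E) :=
  ⟨fun u => F u (Z u).1 (Z u).2,
    hd.continuousOn_F.comp_continuous (continuous_subtype_val.prodMk Z.continuous)
      fun u => ⟨u.2, mem_univ _⟩⟩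

variable {Z W : C(Icc τ T, E × E)} {a b : ℝ}

theorem norm_forwardIntegrand_sub_le (ha : ∀ u, ‖(Z u).1 - (W u).1‖ ≤ a)
    (hb : ∀ u, ‖(Z u).2 - (W u).2‖ ≤ b) (u : Icc τ T) :
    ‖hd.forwardIntegrand Z u - hd.forwardIntegrand W u‖ ≤ K * a + b :=
  calc _ = ‖(η u (Z u).1 - η u (W u).1) + ((Z u).2 - (W u).2)‖ := by
        simp only [forwardIntegrand, ContinuousMap.coe_mk]; abel_nf
    _ ≤ K * ‖(Z u).1 - (W u).1‖ + ‖(Z u).2 - (W u).2‖ :=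
        (norm_add_le _ _).trans (add_le_add_left (hd.lipschitz_η u u.2 _ _) _)
    _ ≤ K * a + b := by gcongr; exacts [hd.nonneg, ha u, hb u]

theorem norm_backwardIntegrand_sub_le (ha : ∀ u, ‖(Z u).1 - (W u).1‖ ≤ a)
    (hb : ∀ u, ‖(Z u).2 - (W u).2‖ ≤ b) (u : Icc τ T) :
    ‖hd.backwardIntegrand Z u - hd.backwardIntegrand W u‖ ≤ K * (a + b) :=
  (hd.lipschitz_F u u.2 _ _ _ _).trans (by gcongr; exacts [hd.nonneg, ha u, hb u])

variable [NormedSpace ℝ E] [Fact (τ ≤ T)]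

noncomputable def picardMap (x : E) (Z : C(Icc τ T, E × E)) : C(Icc τ T, E × E) where
  toFun t := (x - ∫ s in τ..t, IccExtendCM (hd.forwardIntegrand Z) s,
    h (Z ⊤).1 + ∫ s in t..T, IccExtendCM (hd.backwardIntegrand Z) s)
  continuous_toFun :=
    (continuous_const.sub <|
        (continuous_integral_IccExtendCM_from _).comp continuous_subtype_val).prodMk
      (continuous_const.add <|
        (continuous_integral_IccExtendCM_to _).comp continuous_subtype_val)

theorem norm_picardMap_fst_sub_le (x : E) (ha : ∀ u, ‖(Z u).1 - (W u).1‖ ≤ a)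
    (hb : ∀ u, ‖(Z u).2 - (W u).2‖ ≤ b) (t : Icc τ T) :
    ‖(hd.picardMap x Z t).1 - (hd.picardMap x W t).1‖ ≤ (K * a + b) * (T - τ) := by
  simp only [picardMap, ContinuousMap.coe_mk, sub_sub_sub_cancel_left, norm_sub_rev]
  exact norm_integral_IccExtendCM_sub_le (hd.norm_forwardIntegrand_sub_le ha hb)
    (left_mem_Icc.2 Fact.out) t.2

theorem norm_picardMap_snd_sub_le (x : E) (ha : ∀ u, ‖(Z u).1 - (W u).1‖ ≤ a)
    (hb : ∀ u, ‖(Z u).2 - (W u).2‖ ≤ b) (t : Icc τ T) :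
    ‖(hd.picardMap x Z t).2 - (hd.picardMap x W t).2‖ ≤ K * a + K * (a + b) * (T - τ) := by
  simp only [picardMap, ContinuousMap.coe_mk, add_sub_add_comm]
  refine (norm_add_le _ _).trans (add_le_add ?_ ?_)
  · exact (hd.lipschitz_h _ _).trans (mul_le_mul_of_nonneg_left (ha ⊤) hd.nonneg)
  · exact norm_integral_IccExtendCM_sub_le (hd.norm_backwardIntegrand_sub_le ha hb)
      t.2 (right_mem_Icc.2 Fact.out)

theorem dist_picardMap_picardMap_le (hδ : 10 * (K + 1) ^ 2 * (T - τ) ≤ 1) (x : E)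
    (Z W : C(Icc τ T, E × E)) :
    dist (hd.picardMap x (hd.picardMap x Z)) (hd.picardMap x (hd.picardMap x W)) ≤
      2⁻¹ * dist Z W := by
  set D := dist Z W
  set δ := T - τ
  have hδ0 : 0 ≤ δ := sub_nonneg.2 Fact.out
  have hK := hd.nonneg
  have ha₀ := Z.norm_fst_sub_le_dist W
  have hb₀ := Z.norm_snd_sub_le_dist W
  have ha₁ := hd.norm_picardMap_fst_sub_le x ha₀ hb₀
  have hb₁ := hd.norm_picardMap_snd_sub_le x ha₀ hb₀
  have ha₂ := hd.norm_picardMap_fst_sub_le x ha₁ hb₁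
  have hb₂ := hd.norm_picardMap_snd_sub_le x ha₁ hb₁
  have hD : 0 ≤ D := dist_nonneg
  -- Two rounds of the one-step estimates leave both components within `3 (K + 1)² δ D`.
  have hc : (K + 1) ^ 2 * δ * D ≤ D / 10 := by nlinarith
  rw [ContinuousMap.dist_le (by positivity)]
  intro t
  rw [Prod.dist_eq, dist_eq_norm, dist_eq_norm]
  refine max_le ((ha₂ t).trans ?_) ((hb₂ t).trans ?_)
  · nlinarith [mul_nonneg (mul_nonneg hK hδ0) hD, mul_nonneg (mul_nonneg hδ0 hδ0) hD]
  · nlinarith [mul_nonneg (mul_nonneg hK hδ0) hD, mul_nonneg (mul_nonneg hδ0 hδ0) hD]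

theorem contractingWith_picardMap_iterate_two (hδ : 10 * (K + 1) ^ 2 * (T - τ) ≤ 1) (x : E) :
    ContractingWith 2⁻¹ (hd.picardMap x)^[2] :=
  ⟨by norm_num, LipschitzWith.of_dist_le_mul fun Z W => by
    simpa using hd.dist_picardMap_picardMap_le hδ x Z W⟩

theorem existsUnique_isFixedPt_picardMap [CompleteSpace E]
    (hδ : 10 * (K + 1) ^ 2 * (T - τ) ≤ 1) (x : E) :
    ∃! Z, IsFixedPt (hd.picardMap x) Z :=
  have hc := hd.contractingWith_picardMap_iterate_two hδ x
  ⟨_, hc.isFixedPt_fixedPoint_iterate, fun _ hZ => hc.fixedPoint_unique (hZ.iterate 2)⟩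

end Picard

section FBSol

variable {n : ℕ} {K τ T : ℝ} [Fact (τ ≤ T)] {η : ℝ → (Fin n → ℝ) → Fin n → ℝ}
  {F : ℝ → (Fin n → ℝ) → (Fin n → ℝ) → Fin n → ℝ} {h : (Fin n → ℝ) → Fin n → ℝ}
  (hd : IsLipschitzFBData K τ T η F h) {x : Fin n → ℝ}

theorem fbSol_of_isFixedPt {Z : C(Icc τ T, (Fin n → ℝ) × (Fin n → ℝ))}
    (hZ : IsFixedPt (hd.picardMap x) Z) :
    FBSol T τ η F h x (fun s => (IccExtendCM Z s).1) (fun s => (IccExtendCM Z s).2) := by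
  have hT : T ∈ Icc τ T := right_mem_Icc.2 Fact.out
  refine ⟨(IccExtendCM Z).continuous.fst.continuousOn,
    (IccExtendCM Z).continuous.snd.continuousOn, fun t ht => ?_, fun t ht => ?_⟩
  all_goals
    simp only [IccExtendCM_of_mem ht]
    conv_lhs => rw [← hZ]
  · refine congrArg (x - ·) (integral_IccExtendCM_congr (fun u => ?_) (left_mem_Icc.2 Fact.out) ht)
    simp [forwardIntegrand, IccExtendCM_of_mem u.2]
  · refine congrArg₂ (· + ·) ?_ (integral_IccExtendCM_congr (fun u => ?_) ht hT)
    · rw [IccExtendCM_of_mem hT]; rfl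
    · simp [backwardIntegrand, IccExtendCM_of_mem u.2]

theorem isFixedPt_picardMap_of_fbSol {X Y : ℝ → Fin n → ℝ} (hXY : FBSol T τ η F h x X Y) :
    IsFixedPt (hd.picardMap x)
      ⟨fun u => (X u, Y u), hXY.1.domRestrict.prodMk hXY.2.1.domRestrict⟩ := by
  have hT : T ∈ Icc τ T := right_mem_Icc.2 Fact.out
  ext u : 1
  refine Prod.ext ?_ ?_
  · refine (congrArg (x - ·) (integral_IccExtendCM_congr (fun _ => rfl)
      (left_mem_Icc.2 Fact.out) u.2)).trans (hXY.2.2.1 u u.2).symm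
  · refine (congrArg₂ (· + ·) rfl (integral_IccExtendCM_congr (fun _ => rfl) u.2 hT)).trans
      (hXY.2.2.2 u u.2).symm

end FBSol

end IsLipschitzFBData

theorem IsLipschitzFBData.exists_fbSol_unique {n : ℕ} {K τ T : ℝ} [Fact (τ ≤ T)]
    {η : ℝ → (Fin n → ℝ) → Fin n → ℝ} {F : ℝ → (Fin n → ℝ) → (Fin n → ℝ) → Fin n → ℝ}
    {h : (Fin n → ℝ) → Fin n → ℝ} (hd : IsLipschitzFBData K τ T η F h)
    (hδ : 10 * (K + 1) ^ 2 * (T - τ) ≤ 1) (x : Fin n → ℝ) :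
    ∃ X Y : ℝ → Fin n → ℝ, FBSol T τ η F h x X Y ∧
      ∀ X' Y' : ℝ → Fin n → ℝ, FBSol T τ η F h x X' Y' →
        ∀ t ∈ Icc τ T, X' t = X t ∧ Y' t = Y t := by
  obtain ⟨Z, hZ, hZ_unique⟩ := hd.existsUnique_isFixedPt_picardMap hδ x
  refine ⟨_, _, hd.fbSol_of_isFixedPt hZ, fun X' Y' hXY t ht => ?_⟩
  rw [IccExtendCM_of_mem ht, ← hZ_unique _ (hd.isFixedPt_picardMap_of_fbSol hXY)]
  exact ⟨rfl, rfl⟩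

theorem stmt_7_general {n : ℕ} (K : ℝ) (hK : 0 < K) :
    ∃ γ : ℝ, 0 < γ ∧ ∀ T : ℝ, 0 < T →
    ∀ (ηb : ℝ → (Fin n → ℝ) → Fin n → ℝ)
      (Fb : ℝ → (Fin n → ℝ) → (Fin n → ℝ) → Fin n → ℝ)
      (h : (Fin n → ℝ) → Fin n → ℝ),
    ContinuousOn (fun p : ℝ × (Fin n → ℝ) => ηb p.1 p.2)
      (Icc (0:ℝ) T ×ˢ (univ : Set (Fin n → ℝ))) →
    ContinuousOn (fun p : ℝ × (Fin n → ℝ) × (Fin n → ℝ) => Fb p.1 p.2.1 p.2.2)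
      (Icc (0:ℝ) T ×ˢ (univ : Set ((Fin n → ℝ) × (Fin n → ℝ)))) →
    Continuous h →
    (∀ t ∈ Icc (0:ℝ) T, ∀ x x', ‖ηb t x - ηb t x'‖ ≤ K * ‖x - x'‖) →
    (∀ x x', ‖h x - h x'‖ ≤ K * ‖x - x'‖) →
    (∀ t ∈ Icc (0:ℝ) T, ∀ x x' v v',
      ‖Fb t x v - Fb t x' v'‖ ≤ K * (‖x - x'‖ + ‖v - v'‖)) →
    ∀ τ ∈ Icc (0:ℝ) T, T - τ ≤ γ → ∀ x : Fin n → ℝ,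
    ∃ X Y : ℝ → Fin n → ℝ, FBSol T τ ηb Fb h x X Y ∧
      ∀ X' Y' : ℝ → Fin n → ℝ, FBSol T τ ηb Fb h x X' Y' →
        ∀ t ∈ Icc τ T, X' t = X t ∧ Y' t = Y t := by
  have hc : (0 : ℝ) < 10 * (K + 1) ^ 2 := by positivity
  refine ⟨(10 * (K + 1) ^ 2)⁻¹, inv_pos.2 hc, ?_⟩
  intro T _ ηb Fb h hηb hFb _ lipη liph lipF τ hτ hγ x
  have : Fact (τ ≤ T) := ⟨hτ.2⟩
  have hsub : Icc τ T ⊆ Icc 0 T := Icc_subset_Icc_left hτ.1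
  have hd : IsLipschitzFBData K τ T ηb Fb h :=
    ⟨hK.le, hηb.mono (prod_mono hsub subset_rfl), hFb.mono (prod_mono hsub subset_rfl),
      fun t ht => lipη t (hsub ht), liph, fun t ht => lipF t (hsub ht)⟩
  exact hd.exists_fbSol_unique (by rwa [← le_inv_mul_iff₀ hc, mul_one]) x

/-- Short-time existence and uniqueness for the deterministic forward–backward
system, with interval length depending only on the Lipschitz constant `K`. -/
theorem stmt_7 {n : ℕ} (hn : 1 ≤ n) (K : ℝ) (hK : 0 < K) :
    ∃ γ : ℝ, 0 < γ ∧ ∀ T : ℝ, 0 < T →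
    ∀ (ηb : ℝ → (Fin n → ℝ) → Fin n → ℝ)
      (Fb : ℝ → (Fin n → ℝ) → (Fin n → ℝ) → Fin n → ℝ)
      (h : (Fin n → ℝ) → Fin n → ℝ),
    ContinuousOn (fun p : ℝ × (Fin n → ℝ) => ηb p.1 p.2)
      (Icc (0:ℝ) T ×ˢ (univ : Set (Fin n → ℝ))) →
    ContinuousOn (fun p : ℝ × (Fin n → ℝ) × (Fin n → ℝ) => Fb p.1 p.2.1 p.2.2)
      (Icc (0:ℝ) T ×ˢ (univ : Set ((Fin n → ℝ) × (Fin n → ℝ)))) →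
    Continuous h →
    (∀ t ∈ Icc (0:ℝ) T, ∀ x x', ‖ηb t x - ηb t x'‖ ≤ K * ‖x - x'‖) →
    (∀ x x', ‖h x - h x'‖ ≤ K * ‖x - x'‖) →
    (∀ t ∈ Icc (0:ℝ) T, ∀ x x' v v',
      ‖Fb t x v - Fb t x' v'‖ ≤ K * (‖x - x'‖ + ‖v - v'‖)) →
    ∀ τ ∈ Icc (0:ℝ) T, T - τ ≤ γ → ∀ x : Fin n → ℝ,
    ∃ X Y : ℝ → Fin n → ℝ, FBSol T τ ηb Fb h x X Y ∧
      ∀ X' Y' : ℝ → Fin n → ℝ, FBSol T τ ηb Fb h x X' Y' →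
        ∀ t ∈ Icc τ T, X' t = X t ∧ Y' t = Y t :=
  stmt_7_general K hK
end

section
/- Let η̄ : [0,T]×ℝⁿ → ℝⁿ and F̄ : [0,T]×ℝⁿ×ℝⁿ → ℝⁿ be continuous, h : ℝⁿ → ℝⁿ, 0 ≤ τ < T and x ∈ ℝⁿ. Suppose ỹ : [τ,T]×ℝⁿ → ℝⁿ is continuously differentiable in (t,x) and satisfies ∂_t ỹ(t,x) = ((η̄(t,x)+ỹ(t,x)),∇)ỹ(t,x) − F̄(t,x,ỹ(t,x)) on [τ,T]×ℝⁿ with ỹ(T,·) = h. Let X̃ : [τ,T] → ℝⁿ be a continuous function with X̃_t = x − ∫_τ^t (η̄(s,X̃_s) + ỹ(s,X̃_s)) ds for all t ∈ [τ,T]. Then the pair (X̃, Y) with Y_t := ỹ(t, X̃_t) solves the forward–backward system: X̃_t = x − ∫_τ^t (η̄(s,X̃_s) + Y_s) ds and Y_t = h(X̃_T) + ∫_t^T F̄(s,X̃_s,Y_s) ds for all t ∈ [τ,T]. -/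
open Set MeasureTheory intervalIntegral

/-! Method of characteristics. Since `ỹ` is only separately differentiable, the chain rule for
`Y t = ỹ(t, X̃_t)` is obtained from `ỹ(s, z) = ỹ(t, z) + ∫_t^s ∂_r ỹ(r, z) dr` at `z = X̃_s`,
using the joint continuity of `∂_t ỹ`. It gives `Ẏ = ∂_t ỹ - ∇ỹ·(η̄ + ỹ) = -F̄(t, X̃, Y)`, and
integrating from `t` to `T` with `ỹ(T, ·) = h` yields the backward equation. -/

section

variable {E F : Type*} [NormedAddCommGroup E] [NormedSpace ℝ E]
  [NormedAddCommGroup F] [NormedSpace ℝ F] [CompleteSpace F] {a b t : ℝ}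

theorem hasDerivWithinAt_intervalIntegral_diag {φ : ℝ → ℝ → F}
    (hφ : ContinuousOn (Function.uncurry φ) (Icc a b ×ˢ Icc a b)) (ht : t ∈ Icc a b) :
    HasDerivWithinAt (fun s => ∫ r in t..s, φ r s) (φ t t) (Icc a b) t := by
  rw [hasDerivWithinAt_iff_isLittleO, Asymptotics.isLittleO_iff]
  intro ε hε
  obtain ⟨δ, hδ, hφδ⟩ := Metric.continuousWithinAt_iff.1 (hφ (t, t) ⟨ht, ht⟩) ε hε
  filter_upwards [self_mem_nhdsWithin, nhdsWithin_le_nhds (Metric.ball_mem_nhds t hδ)]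
    with s hs hst
  have hsub : uIcc t s ⊆ Icc a b := uIcc_subset_Icc ht hs
  have hint : IntervalIntegrable (fun r => φ r s) volume t s :=
    (hφ.comp (continuousOn_id.prodMk continuousOn_const) fun r hr => ⟨hsub hr, hs⟩)
      |>.intervalIntegrable
  have hbound : ∀ r ∈ uIoc t s, ‖φ r s - φ t t‖ ≤ ε := fun r hr => by
    have hr : r ∈ uIcc t s := uIoc_subset_uIcc hr
    have hrt : dist r t < δ :=
      (dist_comm r t ▸ Real.dist_left_le_of_mem_uIcc hr).trans_lt (dist_comm t s ▸ hst)
    have hdist : dist (r, s) (t, t) < δ := by rw [Prod.dist_eq]; exact max_lt hrt hst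
    rw [← dist_eq_norm]
    exact (hφδ (x := (r, s)) ⟨hsub hr, hs⟩ hdist).le
  calc ‖(∫ r in t..s, φ r s) - (∫ r in t..t, φ r t) - (s - t) • φ t t‖
      = ‖∫ r in t..s, (φ r s - φ t t)‖ := by
        rw [intervalIntegral.integral_same, sub_zero,
          intervalIntegral.integral_sub hint intervalIntegrable_const,
          intervalIntegral.integral_const]
    _ ≤ ε * |s - t| := norm_integral_le_of_norm_le_const hbound
    _ = ε * ‖s - t‖ := by rw [Real.norm_eq_abs]

theorem integral_eq_sub_of_hasDerivWithinAt_Icc {u v : ℝ} {f f' : ℝ → F}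
    (hf : ∀ t ∈ Icc a b, HasDerivWithinAt f (f' t) (Icc a b) t)
    (hf' : ContinuousOn f' (Icc a b)) (hu : u ∈ Icc a b) (hv : v ∈ Icc a b) :
    ∫ r in u..v, f' r = f v - f u := by
  have hsub : uIcc u v ⊆ Icc a b := uIcc_subset_Icc hu hv
  refine integral_eq_sub_of_hasDeriv_right
    (fun t ht => (hf t (hsub ht)).continuousWithinAt.mono hsub) (fun t ht => ?_)
    (hf'.mono hsub).intervalIntegrable
  have hnhds : Icc a b ∈ nhds t :=
    Filter.mem_of_superset (Ioo_mem_nhds ht.1 ht.2) (Ioo_subset_Icc_self.trans hsub)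
  exact ((hf t (hsub (Ioo_subset_Icc_self ht))).hasDerivAt hnhds).hasDerivWithinAt

theorem hasDerivWithinAt_apply_of_partial_derivs {f g : ℝ → E → F} {X : ℝ → E} {X' : E}
    (hf : ∀ s ∈ Icc a b, ∀ z, HasDerivWithinAt (f · z) (g s z) (Icc a b) s)
    (hg : ContinuousOn (Function.uncurry g) (Icc a b ×ˢ univ))
    (hft : DifferentiableAt ℝ (f t) (X t)) (hXc : ContinuousOn X (Icc a b))
    (hX : HasDerivWithinAt X X' (Icc a b) t) (ht : t ∈ Icc a b) :
    HasDerivWithinAt (fun s => f s (X s)) (g t (X t) + fderiv ℝ (f t) (X t) X')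
      (Icc a b) t := by
  have hrepr : ∀ s ∈ Icc a b, f s (X s) = (∫ r in t..s, g r (X s)) + f t (X s) := by
    intro s hs
    have hgs : ContinuousOn (fun r => g r (X s)) (Icc a b) :=
      hg.comp (continuousOn_id.prodMk continuousOn_const) fun r hr => ⟨hr, mem_univ _⟩
    rw [integral_eq_sub_of_hasDerivWithinAt_Icc (fun r hr => hf r hr (X s)) hgs ht hs,
      sub_add_cancel]
  have hgX : ContinuousOn (Function.uncurry fun r s => g r (X s)) (Icc a b ×ˢ Icc a b) :=
    hg.comp (continuousOn_fst.prodMk (hXc.comp continuousOn_snd fun p hp => hp.2))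
      fun p hp => ⟨hp.1, mem_univ _⟩
  exact ((hasDerivWithinAt_intervalIntegral_diag hgX ht).add
    (hft.hasFDerivAt.comp_hasDerivWithinAt t hX)).congr hrepr (hrepr t ht)

end

theorem stmt_11_general {n : ℕ} (T : ℝ)
    (ηb : ℝ → (Fin n → ℝ) → Fin n → ℝ)
    (Fb : ℝ → (Fin n → ℝ) → (Fin n → ℝ) → Fin n → ℝ)
    (h : (Fin n → ℝ) → Fin n → ℝ)
    (hηc : ContinuousOn (fun p : ℝ × (Fin n → ℝ) => ηb p.1 p.2)
      (Icc (0:ℝ) T ×ˢ (univ : Set (Fin n → ℝ))))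
    (hFc : ContinuousOn (fun p : ℝ × (Fin n → ℝ) × (Fin n → ℝ) => Fb p.1 p.2.1 p.2.2)
      (Icc (0:ℝ) T ×ˢ (univ : Set ((Fin n → ℝ) × (Fin n → ℝ)))))
    (τ : ℝ) (hτ0 : 0 ≤ τ) (hτT : τ < T) (x : Fin n → ℝ)
    (ytil : ℝ → (Fin n → ℝ) → Fin n → ℝ)
    -- `ỹ` is continuously differentiable in `(t,x)` on `[τ,T]×ℝⁿ`:
    (hyc : ContinuousOn (fun p : ℝ × (Fin n → ℝ) => ytil p.1 p.2)
      (Icc τ T ×ˢ (univ : Set (Fin n → ℝ))))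
    (hyx : ∀ t ∈ Icc τ T, Differentiable ℝ (ytil t))
    (hytc : ContinuousOn (fun p : ℝ × (Fin n → ℝ) =>
        derivWithin (fun s => ytil s p.2) (Icc τ T) p.1)
      (Icc τ T ×ˢ (univ : Set (Fin n → ℝ))))
    -- `ỹ` satisfies `∂_t ỹ = ((η̄+ỹ),∇)ỹ − F̄(t,x,ỹ)` on `[τ,T]×ℝⁿ`:
    (hpde : ∀ t ∈ Icc τ T, ∀ z : Fin n → ℝ,
      HasDerivWithinAt (fun s => ytil s z)
        (dirDeriv (ytil t) z (ηb t z + ytil t z) - Fb t z (ytil t z)) (Icc τ T) t)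
    (hyT : ∀ z, ytil T z = h z)
    (Xt : ℝ → Fin n → ℝ)
    (hXc : ContinuousOn Xt (Icc τ T))
    (hXeq : ∀ t ∈ Icc τ T, Xt t = x - ∫ s in τ..t, (ηb s (Xt s) + ytil s (Xt s))) :
    FBSol T τ ηb Fb h x Xt (fun t => ytil t (Xt t)) := by
  set Y : ℝ → Fin n → ℝ := fun t => ytil t (Xt t)
  have hsub : Icc τ T ⊆ Icc 0 T := Icc_subset_Icc_left hτ0
  have hpath : ContinuousOn (fun t => (t, Xt t)) (Icc τ T) := continuousOn_id.prodMk hXc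
  have hYc : ContinuousOn Y (Icc τ T) := hyc.comp hpath fun t ht => ⟨ht, mem_univ _⟩
  have hGc : ContinuousOn (fun s => ηb s (Xt s) + Y s) (Icc τ T) :=
    (hηc.comp hpath fun t ht => ⟨hsub ht, mem_univ _⟩).add hYc
  have hFYc : ContinuousOn (fun s => -Fb s (Xt s) (Y s)) (Icc τ T) :=
    (hFc.comp (continuousOn_id.prodMk (hXc.prodMk hYc)) fun t ht => ⟨hsub ht, mem_univ _⟩).neg
  have hXd : ∀ t ∈ Icc τ T, HasDerivWithinAt Xt (-(ηb t (Xt t) + Y t)) (Icc τ T) t := by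
    intro t ht
    -- needed for the `FTCFilter` instance of `𝓝[Icc τ T] t`
    have : Fact (t ∈ Icc τ T) := ⟨ht⟩
    exact ((integral_hasDerivWithinAt_right
      (hGc.mono (uIcc_subset_Icc (left_mem_Icc.2 hτT.le) ht)).intervalIntegrable
      (hGc.stronglyMeasurableAtFilter_nhdsWithin measurableSet_Icc t) (hGc t ht)).const_sub x
      ).congr hXeq (hXeq t ht)
  have hYd : ∀ t ∈ Icc τ T, HasDerivWithinAt Y (-Fb t (Xt t) (Y t)) (Icc τ T) t := by
    intro t ht
    refine (hasDerivWithinAt_apply_of_partial_derivs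
      (fun s hs z => (hpde s hs z).differentiableWithinAt.hasDerivWithinAt) hytc
      (hyx t ht _) hXc (hXd t ht) ht).congr_deriv ?_
    rw [(hpde t ht _).derivWithin (uniqueDiffOn_Icc hτT t ht), map_neg, dirDeriv]
    abel
  refine ⟨hXc, hYc, hXeq, fun t ht => ?_⟩
  have hFTC := integral_eq_sub_of_hasDerivWithinAt_Icc hYd hFYc ht (right_mem_Icc.2 hτT.le)
  rw [intervalIntegral.integral_neg, neg_eq_iff_eq_neg, neg_sub] at hFTC
  rw [← hyT, hFTC, add_sub_cancel]

/-- Verification: if `ỹ` solves the backward inviscid PDE and `X̃` solves the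
associated forward characteristic equation, then `(X̃, ỹ(t,X̃_t))` solves the
forward–backward system. -/
theorem stmt_11 {n : ℕ} (hn : 1 ≤ n) (T : ℝ) (hT : 0 < T)
    (ηb : ℝ → (Fin n → ℝ) → Fin n → ℝ)
    (Fb : ℝ → (Fin n → ℝ) → (Fin n → ℝ) → Fin n → ℝ)
    (h : (Fin n → ℝ) → Fin n → ℝ)
    (hηc : ContinuousOn (fun p : ℝ × (Fin n → ℝ) => ηb p.1 p.2)
      (Icc (0:ℝ) T ×ˢ (univ : Set (Fin n → ℝ))))
    (hFc : ContinuousOn (fun p : ℝ × (Fin n → ℝ) × (Fin n → ℝ) => Fb p.1 p.2.1 p.2.2)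
      (Icc (0:ℝ) T ×ˢ (univ : Set ((Fin n → ℝ) × (Fin n → ℝ)))))
    (τ : ℝ) (hτ0 : 0 ≤ τ) (hτT : τ < T) (x : Fin n → ℝ)
    (ytil : ℝ → (Fin n → ℝ) → Fin n → ℝ)
    -- `ỹ` is continuously differentiable in `(t,x)` on `[τ,T]×ℝⁿ`:
    (hyc : ContinuousOn (fun p : ℝ × (Fin n → ℝ) => ytil p.1 p.2)
      (Icc τ T ×ˢ (univ : Set (Fin n → ℝ))))
    (hyx : ∀ t ∈ Icc τ T, Differentiable ℝ (ytil t))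
    (hyxc : ContinuousOn (fun p : ℝ × (Fin n → ℝ) => fderiv ℝ (ytil p.1) p.2)
      (Icc τ T ×ˢ (univ : Set (Fin n → ℝ))))
    (hytc : ContinuousOn (fun p : ℝ × (Fin n → ℝ) =>
        derivWithin (fun s => ytil s p.2) (Icc τ T) p.1)
      (Icc τ T ×ˢ (univ : Set (Fin n → ℝ))))
    -- `ỹ` satisfies `∂_t ỹ = ((η̄+ỹ),∇)ỹ − F̄(t,x,ỹ)` on `[τ,T]×ℝⁿ`:
    (hpde : ∀ t ∈ Icc τ T, ∀ z : Fin n → ℝ,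
      HasDerivWithinAt (fun s => ytil s z)
        (dirDeriv (ytil t) z (ηb t z + ytil t z) - Fb t z (ytil t z)) (Icc τ T) t)
    (hyT : ∀ z, ytil T z = h z)
    (Xt : ℝ → Fin n → ℝ)
    (hXc : ContinuousOn Xt (Icc τ T))
    (hXeq : ∀ t ∈ Icc τ T, Xt t = x - ∫ s in τ..t, (ηb s (Xt s) + ytil s (Xt s))) :
    FBSol T τ ηb Fb h x Xt (fun t => ytil t (Xt t)) :=
  stmt_11_general T ηb Fb h hηc hFc τ hτ0 hτT x ytil hyc hyx hytc hpde hyT Xt hXc hXeq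
end

section
/- Let (Ω,𝓕) be a measurable space equipped with a filtration (𝓕_t)_{t∈[0,T]}, let m ∈ ℕ with m ≥ 1, and let x ∈ ℝⁿ be fixed. Let η : Ω×ℝ → ℝⁿ satisfy: (i) for each ω, the map t ↦ η(ω,t) is continuous and bounded; (ii) η(ω,t) = 0 for all t ≤ 0 and η(ω,t) = η(ω,T) for all t ≥ T; (iii) for each t ∈ [0,T], the map ω ↦ η(ω,t) is 𝓕_t-measurable. Let φ : ℝ → ℝ be continuous, nonnegative, supported in [−1/m, 1/m], with ∫_ℝ φ = 1. Then for every t ∈ [0,T], the mollification η_m(ω,t) := ∫_ℝ η(ω, t−s) φ(s) ds is well-defined and the map ω ↦ η_m(ω,t) is 𝓕_{min(t+1/m, T)}-measurable. -/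
open Set MeasureTheory

/-!
The integrand `(s, ω) ↦ φ s • η ω (t - s)` is continuous with compact support in `s`, hence
integrable. Since `φ` vanishes off `[-1/m, 1/m]`, for fixed `s` it only involves `η` at a time
`t - s ≤ t + 1/m`; adaptedness, with `η` frozen before `0` and after `T`, makes it
`𝓕_{min(t+1/m, T)}`-measurable in `ω`.
Continuity in `s` upgrades this to joint measurability for `Borel ⊗ 𝓕_{min(t+1/m, T)}`, and
Fubini's measurability lemma then passes it to the integral in `s`.
-/

theorem stronglyMeasurable_integral_of_continuous {ι Ω E : Type*} [TopologicalSpace ι]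
    [TopologicalSpace.MetrizableSpace ι] [MeasurableSpace ι]
    [SecondCountableTopology ι] [OpensMeasurableSpace ι] [NormedAddCommGroup E]
    [NormedSpace ℝ E] {𝓖 : MeasurableSpace Ω} (μ : Measure ι) [SFinite μ] {f : ι → Ω → E}
    (hcont : ∀ ω, Continuous fun i => f i ω) (hmeas : ∀ i, StronglyMeasurable[𝓖] (f i)) :
    StronglyMeasurable[𝓖] fun ω => ∫ i, f i ω ∂μ :=
  (stronglyMeasurable_uncurry_of_continuous_of_stronglyMeasurable hcont hmeas).integral_prod_left

theorem measurable_apply_of_le {Ω E : Type*} [MeasurableSpace E] [Zero E]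
    {ℱ : ℝ → MeasurableSpace Ω} (hmono : Monotone ℱ) {T : ℝ} (hT : 0 ≤ T) {η : Ω → ℝ → E}
    (h0 : ∀ ω, ∀ t : ℝ, t ≤ 0 → η ω t = 0) (hTc : ∀ ω, ∀ t : ℝ, T ≤ t → η ω t = η ω T)
    (hadapted : ∀ t ∈ Icc (0:ℝ) T, Measurable[ℱ t] (fun ω => η ω t)) {u τ : ℝ} (hu : u ≤ τ) :
    Measurable[ℱ (min τ T)] fun ω => η ω u := by
  rcases le_or_gt u 0 with hu0 | hu0
  · simp only [h0 _ u hu0]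
    exact measurable_const
  rcases le_or_gt u T with huT | huT
  · exact (hadapted u ⟨hu0.le, huT⟩).mono (hmono (le_min hu huT)) le_rfl
  · rw [min_eq_right (huT.le.trans hu)]
    simp only [hTc _ u huT.le]
    exact hadapted T ⟨hT, le_rfl⟩

theorem stmt_16_general {n : ℕ} {Ω : Type*}
    (T : ℝ)
    (ℱ : ℝ → MeasurableSpace Ω)
    (hmono : ∀ s t : ℝ, s ≤ t → ℱ s ≤ ℱ t)
    (m : ℕ)
    (η : Ω → ℝ → Fin n → ℝ)
    (hcont : ∀ ω, Continuous (η ω))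
    (h0 : ∀ ω, ∀ t : ℝ, t ≤ 0 → η ω t = 0)
    (hTc : ∀ ω, ∀ t : ℝ, T ≤ t → η ω t = η ω T)
    (hadapted : ∀ t ∈ Icc (0:ℝ) T, Measurable[ℱ t] (fun ω => η ω t))
    (φ : ℝ → ℝ)
    (hφc : Continuous φ)
    (hφsupp : ∀ s : ℝ, φ s ≠ 0 → |s| ≤ 1 / (m : ℝ)) :
    ∀ t ∈ Icc (0:ℝ) T,
      (∀ ω, Integrable (fun s : ℝ => φ s • η ω (t - s))) ∧
      Measurable[ℱ (min (t + 1 / (m : ℝ)) T)]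
        (fun ω => ∫ s : ℝ, φ s • η ω (t - s)) := by
  intro t ht
  have hφ : HasCompactSupport φ :=
    HasCompactSupport.intro (isCompact_closedBall 0 (1 / (m : ℝ))) fun s hs =>
      by_contra fun h => hs (by simpa using hφsupp s h)
  have hpath : ∀ ω, Continuous fun s => φ s • η ω (t - s) :=
    fun ω => hφc.smul ((hcont ω).comp (continuous_sub_left t))
  refine ⟨fun ω => (hpath ω).integrable_of_hasCompactSupport hφ.smul_right, ?_⟩
  refine (stronglyMeasurable_integral_of_continuous volume hpath fun s => ?_).measurable
  by_cases hs : φ s = 0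
  · simp only [hs, zero_smul]
    exact stronglyMeasurable_const
  have hts : t - s ≤ t + 1 / (m : ℝ) := by linarith [(abs_le.mp (hφsupp s hs)).1]
  exact (measurable_apply_of_le (fun _ _ => hmono _ _) (ht.1.trans ht.2) h0 hTc hadapted
    hts).stronglyMeasurable.const_smul (φ s)

/-- Measurability of the time-mollification of an adapted, pathwise continuous
process: `η_m(·,t)` is `𝓕_{min(t+1/m, T)}`-measurable. -/
theorem stmt_16 {n : ℕ} (hn : 1 ≤ n) {Ω : Type*} [mΩ : MeasurableSpace Ω]
    (T : ℝ) (hT : 0 < T)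
    (ℱ : ℝ → MeasurableSpace Ω)
    (hmono : ∀ s t : ℝ, s ≤ t → ℱ s ≤ ℱ t)
    (hle : ∀ t : ℝ, ℱ t ≤ mΩ)
    (m : ℕ) (hm : 1 ≤ m) (x : Fin n → ℝ)
    (η : Ω → ℝ → Fin n → ℝ)
    (hcont : ∀ ω, Continuous (η ω))
    (hbdd : ∀ ω, ∃ M : ℝ, ∀ t : ℝ, ‖η ω t‖ ≤ M)
    (h0 : ∀ ω, ∀ t : ℝ, t ≤ 0 → η ω t = 0)
    (hTc : ∀ ω, ∀ t : ℝ, T ≤ t → η ω t = η ω T)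
    (hadapted : ∀ t ∈ Icc (0:ℝ) T, Measurable[ℱ t] (fun ω => η ω t))
    (φ : ℝ → ℝ)
    (hφc : Continuous φ)
    (hφ0 : ∀ s, 0 ≤ φ s)
    (hφsupp : ∀ s : ℝ, φ s ≠ 0 → |s| ≤ 1 / (m : ℝ))
    (hφint : ∫ s : ℝ, φ s = 1) :
    ∀ t ∈ Icc (0:ℝ) T,
      (∀ ω, Integrable (fun s : ℝ => φ s • η ω (t - s))) ∧
      Measurable[ℱ (min (t + 1 / (m : ℝ)) T)]
        (fun ω => ∫ s : ℝ, φ s • η ω (t - s)) :=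
  stmt_16_general T ℱ hmono m η hcont h0 hTc hadapted φ hφc hφsupp
end

section
/- Let (η̄, F̄, h) and (η̄', F̄', h') be two triples of continuous data, each K-Lipschitz in the spatial variables (|η̄(t,x)−η̄(t,x')| ≤ K|x−x'|, |h(x)−h(x')| ≤ K|x−x'|, |F̄(t,x,y)−F̄(t,x',y')| ≤ K(|x−x'|+|y−y'|), and the same for the primed data), and with |h|, |h'| ≤ C₁ and |F̄(t,x,y)|, |F̄'(t,x,y)| ≤ C₁(1+|y|). Then there exist constants γ'_K > 0, depending only on K, and μ > 0, depending only on K, C₁ and T, such that for every τ ∈ [0,T] with T−τ ≤ γ'_K and every x ∈ ℝⁿ: if (X,Y) is a continuous solution on [τ,T] of the forward–backward system with data (η̄, F̄, h) and initial point x, and (X',Y') is a continuous solution on [τ,T] of the forward–backward system with data (η̄', F̄', h') and initial point x, then sup_{t∈[τ,T]} (|X_t − X'_t|² + |Y_t − Y'_t|²) ≤ μ ( |h(X_T) − h'(X_T)|² + ∫_τ^T ( |F̄(s,X_s,Y_s) − F̄'(s,X_s,Y_s)|² + |η̄(s,X_s) − η̄'(s,X_s)|² ) ds ). -/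
/-!
Let `a` and `b` be the maxima of `‖X - X'‖` and `‖Y - Y'‖` on `[τ, T]`, and `δ = T - τ`.
Subtracting the integral equations and using the Lipschitz bounds of the primed data along
`(X, Y)` gives `a ≤ E_η + δ (K a + b)` and `b ≤ e_h + K a + E_F + δ K (a + b)`, where `e_h`,
`E_F`, `E_η` measure, in `L¹` for the integral terms, how far the primed data are from the
unprimed ones along the first solution. Adding `K + 1` times the first inequality to the second
gives `a + b ≤ (K + 2) (e_h + E_F + E_η) + (K + 2)² δ (a + b)`, so the smallness condition
`(K + 2)² δ ≤ 1/2` bounds `a + b` by the defects, and Cauchy–Schwarz turns the `L¹` defects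
into `L²` ones.
-/

open Set MeasureTheory intervalIntegral

lemma sq_intervalIntegral_le {a b : ℝ} (hab : a ≤ b) {f : ℝ → ℝ} (hf : ContinuousOn f (Icc a b)) :
    (∫ s in a..b, f s) ^ 2 ≤ (b - a) * ∫ s in a..b, f s ^ 2 := by
  rcases hab.eq_or_lt with rfl | hlt
  · simp
  have hf1 : IntervalIntegrable f volume a b := hf.intervalIntegrable_of_Icc hab
  have hf2 : IntervalIntegrable (fun s => f s ^ 2) volume a b :=
    (hf.pow 2).intervalIntegrable_of_Icc hab
  set c := (∫ s in a..b, f s) / (b - a)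
  have hvar : 0 ≤ ∫ s in a..b, (f s - c) ^ 2 := integral_nonneg hab fun _ _ => sq_nonneg _
  have hexpand : ∫ s in a..b, (f s - c) ^ 2
      = (∫ s in a..b, f s ^ 2) - 2 * c * (∫ s in a..b, f s) + (b - a) * c ^ 2 := by
    simp_rw [sub_sq, mul_right_comm 2 _ c, mul_comm _ c]
    rw [integral_add (hf2.sub (hf1.const_mul _)) intervalIntegrable_const,
      integral_sub hf2 (hf1.const_mul _), intervalIntegral.integral_const_mul,
      intervalIntegral.integral_const, smul_eq_mul]
  have hc : c * (b - a) = ∫ s in a..b, f s := div_mul_cancel₀ _ (sub_pos.2 hlt).ne'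
  rw [hexpand] at hvar
  nlinarith [mul_nonneg (sub_pos.2 hlt).le hvar]

lemma ContinuousOn.comp_uncurry_graph {α β γ : Type*} [TopologicalSpace α] [TopologicalSpace β]
    [TopologicalSpace γ] {f : α → β → γ} {S s : Set α}
    (hf : ContinuousOn (fun p : α × β => f p.1 p.2) (S ×ˢ univ)) {Z : α → β}
    (hZ : ContinuousOn Z s) (hs : s ⊆ S) : ContinuousOn (fun t => f t (Z t)) s :=
  hf.comp (continuousOn_id.prodMk hZ) fun _ ht => ⟨hs ht, mem_univ _⟩

lemma ContinuousOn.comp_uncurry_graph₂ {α β γ δ : Type*} [TopologicalSpace α]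
    [TopologicalSpace β] [TopologicalSpace γ] [TopologicalSpace δ] {f : α → β → γ → δ}
    {S s : Set α} (hf : ContinuousOn (fun p : α × β × γ => f p.1 p.2.1 p.2.2) (S ×ˢ univ))
    {Z : α → β} {W : α → γ} (hZ : ContinuousOn Z s) (hW : ContinuousOn W s) (hs : s ⊆ S) :
    ContinuousOn (fun t => f t (Z t) (W t)) s :=
  hf.comp_uncurry_graph (f := fun t q => f t q.1 q.2) (hZ.prodMk hW) hs

lemma norm_intervalIntegral_sub_le {E : Type*} [NormedAddCommGroup E] [NormedSpace ℝ E]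
    {f g d : ℝ → E} {τ T u v c : ℝ} (hτu : τ ≤ u) (huv : u ≤ v) (hvT : v ≤ T)
    (hf : ContinuousOn f (Icc τ T)) (hg : ContinuousOn g (Icc τ T))
    (hd : ContinuousOn d (Icc τ T)) (hc : 0 ≤ c)
    (hfg : ∀ s ∈ Icc τ T, ‖f s - g s‖ ≤ ‖d s‖ + c) :
    ‖(∫ s in u..v, f s) - ∫ s in u..v, g s‖ ≤ (∫ s in τ..T, ‖d s‖) + (T - τ) * c := by
  have hsub : uIcc u v ⊆ Icc τ T := by
    rw [uIcc_of_le huv]; exact Icc_subset_Icc hτu hvT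
  have hint : ∀ {k : ℝ → E}, ContinuousOn k (Icc τ T) → IntervalIntegrable k volume u v :=
    fun hk => (hk.mono hsub).intervalIntegrable
  calc ‖(∫ s in u..v, f s) - ∫ s in u..v, g s‖
      = ‖∫ s in u..v, (f s - g s)‖ := by rw [integral_sub (hint hf) (hint hg)]
    _ ≤ ∫ s in u..v, (‖d s‖ + c) :=
        norm_integral_le_of_norm_le huv
          (ae_of_all _ fun s hs => hfg s ⟨hτu.trans hs.1.le, hs.2.trans hvT⟩)
          ((hint hd).norm.add intervalIntegrable_const)
    _ = (∫ s in u..v, ‖d s‖) + (v - u) * c := by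
        rw [integral_add (hint hd).norm intervalIntegrable_const, intervalIntegral.integral_const,
          smul_eq_mul]
    _ ≤ (∫ s in τ..T, ‖d s‖) + (T - τ) * c :=
        add_le_add
          (integral_mono_interval hτu huv hvT (ae_of_all _ fun _ => norm_nonneg _)
            (hd.norm.intervalIntegrable_of_Icc (hτu.trans (huv.trans hvT))))
          (mul_le_mul_of_nonneg_right (by linarith) hc)

lemma add_le_of_coupled_le {K δ a b Ex Ey : ℝ} (hK : 0 ≤ K) (hδ : (K + 2) ^ 2 * δ ≤ 1 / 2)
    (hδ0 : 0 ≤ δ) (ha0 : 0 ≤ a) (hb0 : 0 ≤ b) (hEy : 0 ≤ Ey)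
    (ha : a ≤ Ex + δ * (K * a + b)) (hb : b ≤ Ey + K * a + δ * (K * (a + b))) :
    a + b ≤ 2 * (K + 2) * (Ex + Ey) := by
  have hsum : a + b ≤ (K + 2) * (Ex + Ey) + (K + 2) ^ 2 * δ * (a + b) := by
    nlinarith [mul_nonneg (mul_nonneg hK hδ0) ha0, mul_nonneg (mul_nonneg hK hδ0) hb0,
      mul_nonneg (mul_nonneg (mul_nonneg hK hK) hδ0) hb0, mul_nonneg hδ0 ha0, mul_nonneg hδ0 hb0]
  nlinarith [mul_le_mul_of_nonneg_right hδ (add_nonneg ha0 hb0)]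

namespace FBSol

variable {n : ℕ} {T τ K a b : ℝ} {x : Fin n → ℝ} {ηb ηb' : ℝ → (Fin n → ℝ) → Fin n → ℝ}
  {Fb Fb' : ℝ → (Fin n → ℝ) → (Fin n → ℝ) → Fin n → ℝ} {h h' : (Fin n → ℝ) → Fin n → ℝ}
  {X Y X' Y' : ℝ → Fin n → ℝ}

lemma norm_sub_le_forward (hsol : FBSol T τ ηb Fb h x X Y) (hsol' : FBSol T τ ηb' Fb' h' x X' Y')
    (hηc : ContinuousOn (fun p : ℝ × (Fin n → ℝ) => ηb p.1 p.2) (Icc τ T ×ˢ univ))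
    (hη'c : ContinuousOn (fun p : ℝ × (Fin n → ℝ) => ηb' p.1 p.2) (Icc τ T ×ˢ univ))
    (hLη' : ∀ t ∈ Icc τ T, ∀ x x', ‖ηb' t x - ηb' t x'‖ ≤ K * ‖x - x'‖) (hK : 0 ≤ K)
    (ha : ∀ s ∈ Icc τ T, ‖X s - X' s‖ ≤ a) (hb : ∀ s ∈ Icc τ T, ‖Y s - Y' s‖ ≤ b)
    {u : ℝ} (hu : u ∈ Icc τ T) :
    ‖X u - X' u‖ ≤ (∫ s in τ..T, ‖ηb s (X s) - ηb' s (X s)‖) + (T - τ) * (K * a + b) := by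
  obtain ⟨hX, hY, hXeq, -⟩ := hsol
  obtain ⟨hX', hY', hX'eq, -⟩ := hsol'
  have ha0 : 0 ≤ a := (norm_nonneg _).trans (ha u hu)
  have hb0 : 0 ≤ b := (norm_nonneg _).trans (hb u hu)
  rw [hXeq u hu, hX'eq u hu, sub_sub_sub_cancel_left, norm_sub_rev]
  refine norm_intervalIntegral_sub_le le_rfl hu.1 hu.2 ((hηc.comp_uncurry_graph hX le_rfl).add hY)
    ((hη'c.comp_uncurry_graph hX' le_rfl).add hY')
    ((hηc.comp_uncurry_graph hX le_rfl).sub (hη'c.comp_uncurry_graph hX le_rfl)) (by positivity)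
    fun s hs => ?_
  calc ‖ηb s (X s) + Y s - (ηb' s (X' s) + Y' s)‖
      = ‖(ηb s (X s) - ηb' s (X s)) + (ηb' s (X s) - ηb' s (X' s)) + (Y s - Y' s)‖ := by
        congr 1; abel
    _ ≤ ‖ηb s (X s) - ηb' s (X s)‖ + ‖ηb' s (X s) - ηb' s (X' s)‖ + ‖Y s - Y' s‖ :=
        norm_add₃_le
    _ ≤ ‖ηb s (X s) - ηb' s (X s)‖ + (K * a + b) := by
        have := mul_le_mul_of_nonneg_left (ha s hs) hK
        linarith [hb s hs, hLη' s hs (X s) (X' s)]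

lemma norm_sub_le_backward (hsol : FBSol T τ ηb Fb h x X Y) (hsol' : FBSol T τ ηb' Fb' h' x X' Y')
    (hFc : ContinuousOn (fun p : ℝ × (Fin n → ℝ) × (Fin n → ℝ) => Fb p.1 p.2.1 p.2.2)
      (Icc τ T ×ˢ univ))
    (hF'c : ContinuousOn (fun p : ℝ × (Fin n → ℝ) × (Fin n → ℝ) => Fb' p.1 p.2.1 p.2.2)
      (Icc τ T ×ˢ univ))
    (hLh' : ∀ x x', ‖h' x - h' x'‖ ≤ K * ‖x - x'‖)
    (hLF' : ∀ t ∈ Icc τ T, ∀ x x' v v', ‖Fb' t x v - Fb' t x' v'‖ ≤ K * (‖x - x'‖ + ‖v - v'‖))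
    (hK : 0 ≤ K) (ha : ∀ s ∈ Icc τ T, ‖X s - X' s‖ ≤ a) (hb : ∀ s ∈ Icc τ T, ‖Y s - Y' s‖ ≤ b)
    {u : ℝ} (hu : u ∈ Icc τ T) :
    ‖Y u - Y' u‖ ≤ ‖h (X T) - h' (X T)‖ + K * a +
      ((∫ s in τ..T, ‖Fb s (X s) (Y s) - Fb' s (X s) (Y s)‖) + (T - τ) * (K * (a + b))) := by
  obtain ⟨hX, hY, -, hYeq⟩ := hsol
  obtain ⟨hX', hY', -, hY'eq⟩ := hsol'
  have hT : T ∈ Icc τ T := ⟨hu.1.trans hu.2, le_rfl⟩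
  have ha0 : 0 ≤ a := (norm_nonneg _).trans (ha u hu)
  have hb0 : 0 ≤ b := (norm_nonneg _).trans (hb u hu)
  have hFXY := hFc.comp_uncurry_graph₂ hX hY le_rfl
  have hF'XY := hF'c.comp_uncurry_graph₂ hX hY le_rfl
  have hterminal : ‖h (X T) - h' (X' T)‖ ≤ ‖h (X T) - h' (X T)‖ + K * a := by
    calc ‖h (X T) - h' (X' T)‖ ≤ ‖h (X T) - h' (X T)‖ + ‖h' (X T) - h' (X' T)‖ :=
          norm_sub_le_norm_sub_add_norm_sub _ _ _
      _ ≤ ‖h (X T) - h' (X T)‖ + K * a := by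
          gcongr
          exact (hLh' _ _).trans (mul_le_mul_of_nonneg_left (ha T hT) hK)
  have hdrift := norm_intervalIntegral_sub_le (c := K * (a + b)) hu.1 hu.2 le_rfl hFXY
    (hF'c.comp_uncurry_graph₂ hX' hY' le_rfl) (hFXY.sub hF'XY) (by positivity) fun s hs => by
      calc ‖Fb s (X s) (Y s) - Fb' s (X' s) (Y' s)‖
          ≤ ‖Fb s (X s) (Y s) - Fb' s (X s) (Y s)‖ + ‖Fb' s (X s) (Y s) - Fb' s (X' s) (Y' s)‖ :=
            norm_sub_le_norm_sub_add_norm_sub _ _ _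
        _ ≤ ‖Fb s (X s) (Y s) - Fb' s (X s) (Y s)‖ + K * (a + b) := by
            gcongr
            exact (hLF' s hs _ _ _ _).trans
              (mul_le_mul_of_nonneg_left (add_le_add (ha s hs) (hb s hs)) hK)
  rw [hYeq u hu, hY'eq u hu, add_sub_add_comm]
  exact (norm_add_le _ _).trans (add_le_add hterminal hdrift)

lemma norm_sub_add_norm_sub_le (hsol : FBSol T τ ηb Fb h x X Y)
    (hsol' : FBSol T τ ηb' Fb' h' x X' Y')
    (hηc : ContinuousOn (fun p : ℝ × (Fin n → ℝ) => ηb p.1 p.2) (Icc τ T ×ˢ univ))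
    (hη'c : ContinuousOn (fun p : ℝ × (Fin n → ℝ) => ηb' p.1 p.2) (Icc τ T ×ˢ univ))
    (hFc : ContinuousOn (fun p : ℝ × (Fin n → ℝ) × (Fin n → ℝ) => Fb p.1 p.2.1 p.2.2)
      (Icc τ T ×ˢ univ))
    (hF'c : ContinuousOn (fun p : ℝ × (Fin n → ℝ) × (Fin n → ℝ) => Fb' p.1 p.2.1 p.2.2)
      (Icc τ T ×ˢ univ))
    (hLη' : ∀ t ∈ Icc τ T, ∀ x x', ‖ηb' t x - ηb' t x'‖ ≤ K * ‖x - x'‖)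
    (hLh' : ∀ x x', ‖h' x - h' x'‖ ≤ K * ‖x - x'‖)
    (hLF' : ∀ t ∈ Icc τ T, ∀ x x' v v', ‖Fb' t x v - Fb' t x' v'‖ ≤ K * (‖x - x'‖ + ‖v - v'‖))
    (hK : 0 ≤ K) (hδ : (K + 2) ^ 2 * (T - τ) ≤ 1 / 2) {t : ℝ} (ht : t ∈ Icc τ T) :
    ‖X t - X' t‖ + ‖Y t - Y' t‖ ≤ 2 * (K + 2) * (‖h (X T) - h' (X T)‖ +
      (∫ s in τ..T, ‖Fb s (X s) (Y s) - Fb' s (X s) (Y s)‖) +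
      ∫ s in τ..T, ‖ηb s (X s) - ηb' s (X s)‖) := by
  have hτT : τ ≤ T := ht.1.trans ht.2
  obtain ⟨t₁, ht₁, hmax₁⟩ := isCompact_Icc.exists_isMaxOn (nonempty_Icc.2 hτT)
    (hsol.1.sub hsol'.1).norm
  obtain ⟨t₂, ht₂, hmax₂⟩ := isCompact_Icc.exists_isMaxOn (nonempty_Icc.2 hτT)
    (hsol.2.1.sub hsol'.2.1).norm
  have ha : ∀ s ∈ Icc τ T, ‖X s - X' s‖ ≤ ‖X t₁ - X' t₁‖ := fun _ hs => hmax₁ hs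
  have hb : ∀ s ∈ Icc τ T, ‖Y s - Y' s‖ ≤ ‖Y t₂ - Y' t₂‖ := fun _ hs => hmax₂ hs
  have hforward := hsol.norm_sub_le_forward hsol' hηc hη'c hLη' hK ha hb ht₁
  have hbackward := hsol.norm_sub_le_backward hsol' hFc hF'c hLh' hLF' hK ha hb ht₂
  have hEF : 0 ≤ ∫ s in τ..T, ‖Fb s (X s) (Y s) - Fb' s (X s) (Y s)‖ :=
    integral_nonneg hτT fun _ _ => norm_nonneg _
  have hab := add_le_of_coupled_le hK hδ (sub_nonneg.2 hτT) (norm_nonneg _) (norm_nonneg _)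
    (add_nonneg (norm_nonneg _) hEF) hforward (by linarith [hbackward])
  linarith [ha t ht, hb t ht]

lemma norm_sub_sq_add_norm_sub_sq_le (hsol : FBSol T τ ηb Fb h x X Y)
    (hsol' : FBSol T τ ηb' Fb' h' x X' Y')
    (hηc : ContinuousOn (fun p : ℝ × (Fin n → ℝ) => ηb p.1 p.2) (Icc τ T ×ˢ univ))
    (hη'c : ContinuousOn (fun p : ℝ × (Fin n → ℝ) => ηb' p.1 p.2) (Icc τ T ×ˢ univ))
    (hFc : ContinuousOn (fun p : ℝ × (Fin n → ℝ) × (Fin n → ℝ) => Fb p.1 p.2.1 p.2.2)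
      (Icc τ T ×ˢ univ))
    (hF'c : ContinuousOn (fun p : ℝ × (Fin n → ℝ) × (Fin n → ℝ) => Fb' p.1 p.2.1 p.2.2)
      (Icc τ T ×ˢ univ))
    (hLη' : ∀ t ∈ Icc τ T, ∀ x x', ‖ηb' t x - ηb' t x'‖ ≤ K * ‖x - x'‖)
    (hLh' : ∀ x x', ‖h' x - h' x'‖ ≤ K * ‖x - x'‖)
    (hLF' : ∀ t ∈ Icc τ T, ∀ x x' v v', ‖Fb' t x v - Fb' t x' v'‖ ≤ K * (‖x - x'‖ + ‖v - v'‖))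
    (hK : 0 ≤ K) (hδ : (K + 2) ^ 2 * (T - τ) ≤ 1 / 2) {t : ℝ} (ht : t ∈ Icc τ T) :
    ‖X t - X' t‖ ^ 2 + ‖Y t - Y' t‖ ^ 2 ≤ 12 * (K + 2) ^ 2 * (‖h (X T) - h' (X T)‖ ^ 2 +
      ∫ s in τ..T, (‖Fb s (X s) (Y s) - Fb' s (X s) (Y s)‖ ^ 2 +
        ‖ηb s (X s) - ηb' s (X s)‖ ^ 2)) := by
  have hτT : τ ≤ T := ht.1.trans ht.2
  have hδ1 : T - τ ≤ 1 := by nlinarith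
  have hX := hsol.1
  have hY := hsol.2.1
  have hdF := ((hFc.comp_uncurry_graph₂ hX hY le_rfl).sub
    (hF'c.comp_uncurry_graph₂ hX hY le_rfl)).norm
  have hdη := ((hηc.comp_uncurry_graph hX le_rfl).sub (hη'c.comp_uncurry_graph hX le_rfl)).norm
  set e := ‖h (X T) - h' (X T)‖
  set EF := ∫ s in τ..T, ‖Fb s (X s) (Y s) - Fb' s (X s) (Y s)‖
  set Eη := ∫ s in τ..T, ‖ηb s (X s) - ηb' s (X s)‖
  set QF := ∫ s in τ..T, ‖Fb s (X s) (Y s) - Fb' s (X s) (Y s)‖ ^ 2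
  set Qη := ∫ s in τ..T, ‖ηb s (X s) - ηb' s (X s)‖ ^ 2
  have hQ : (∫ s in τ..T, (‖Fb s (X s) (Y s) - Fb' s (X s) (Y s)‖ ^ 2 +
      ‖ηb s (X s) - ηb' s (X s)‖ ^ 2)) = QF + Qη :=
    integral_add ((hdF.pow 2).intervalIntegrable_of_Icc hτT)
      ((hdη.pow 2).intervalIntegrable_of_Icc hτT)
  have hQF : EF ^ 2 ≤ QF := (sq_intervalIntegral_le hτT hdF).trans
    (mul_le_of_le_one_left (integral_nonneg hτT fun _ _ => sq_nonneg _) hδ1)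
  have hQη : Eη ^ 2 ≤ Qη := (sq_intervalIntegral_le hτT hdη).trans
    (mul_le_of_le_one_left (integral_nonneg hτT fun _ _ => sq_nonneg _) hδ1)
  have hsum := hsol.norm_sub_add_norm_sub_le hsol' hηc hη'c hFc hF'c hLη' hLh' hLF' hK hδ ht
  rw [hQ]
  calc ‖X t - X' t‖ ^ 2 + ‖Y t - Y' t‖ ^ 2 ≤ (‖X t - X' t‖ + ‖Y t - Y' t‖) ^ 2 := by
        nlinarith [norm_nonneg (X t - X' t), norm_nonneg (Y t - Y' t)]
    _ ≤ (2 * (K + 2) * (e + EF + Eη)) ^ 2 := by gcongr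
    _ = 4 * (K + 2) ^ 2 * (e + EF + Eη) ^ 2 := by ring
    _ ≤ 4 * (K + 2) ^ 2 * (3 * (e ^ 2 + EF ^ 2 + Eη ^ 2)) := by
        gcongr
        nlinarith [sq_nonneg (e - EF), sq_nonneg (e - Eη), sq_nonneg (EF - Eη)]
    _ ≤ 12 * (K + 2) ^ 2 * (e ^ 2 + (QF + Qη)) := by nlinarith

end FBSol

theorem stmt_17_general {n : ℕ} (K : ℝ) (hK : 0 < K) :
    ∃ γ' : ℝ, 0 < γ' ∧ ∀ T : ℝ, 0 < T → ∀ C₁ : ℝ, 0 < C₁ →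
    ∃ μ : ℝ, 0 < μ ∧
    ∀ (ηb ηb' : ℝ → (Fin n → ℝ) → Fin n → ℝ)
      (Fb Fb' : ℝ → (Fin n → ℝ) → (Fin n → ℝ) → Fin n → ℝ)
      (h h' : (Fin n → ℝ) → Fin n → ℝ),
    ContinuousOn (fun p : ℝ × (Fin n → ℝ) => ηb p.1 p.2)
      (Icc (0:ℝ) T ×ˢ (univ : Set (Fin n → ℝ))) →
    ContinuousOn (fun p : ℝ × (Fin n → ℝ) => ηb' p.1 p.2)
      (Icc (0:ℝ) T ×ˢ (univ : Set (Fin n → ℝ))) →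
    ContinuousOn (fun p : ℝ × (Fin n → ℝ) × (Fin n → ℝ) => Fb p.1 p.2.1 p.2.2)
      (Icc (0:ℝ) T ×ˢ (univ : Set ((Fin n → ℝ) × (Fin n → ℝ)))) →
    ContinuousOn (fun p : ℝ × (Fin n → ℝ) × (Fin n → ℝ) => Fb' p.1 p.2.1 p.2.2)
      (Icc (0:ℝ) T ×ˢ (univ : Set ((Fin n → ℝ) × (Fin n → ℝ)))) →
    Continuous h → Continuous h' →
    (∀ t ∈ Icc (0:ℝ) T, ∀ x x', ‖ηb t x - ηb t x'‖ ≤ K * ‖x - x'‖) →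
    (∀ t ∈ Icc (0:ℝ) T, ∀ x x', ‖ηb' t x - ηb' t x'‖ ≤ K * ‖x - x'‖) →
    (∀ x x', ‖h x - h x'‖ ≤ K * ‖x - x'‖) →
    (∀ x x', ‖h' x - h' x'‖ ≤ K * ‖x - x'‖) →
    (∀ t ∈ Icc (0:ℝ) T, ∀ x x' v v',
      ‖Fb t x v - Fb t x' v'‖ ≤ K * (‖x - x'‖ + ‖v - v'‖)) →
    (∀ t ∈ Icc (0:ℝ) T, ∀ x x' v v',
      ‖Fb' t x v - Fb' t x' v'‖ ≤ K * (‖x - x'‖ + ‖v - v'‖)) →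
    (∀ x, ‖h x‖ ≤ C₁) → (∀ x, ‖h' x‖ ≤ C₁) →
    (∀ t ∈ Icc (0:ℝ) T, ∀ x v, ‖Fb t x v‖ ≤ C₁ * (1 + ‖v‖)) →
    (∀ t ∈ Icc (0:ℝ) T, ∀ x v, ‖Fb' t x v‖ ≤ C₁ * (1 + ‖v‖)) →
    ∀ τ : ℝ, 0 ≤ τ → τ ≤ T → T - τ ≤ γ' → ∀ x : Fin n → ℝ,
    ∀ X Y X' Y' : ℝ → Fin n → ℝ,
    FBSol T τ ηb Fb h x X Y → FBSol T τ ηb' Fb' h' x X' Y' →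
    ∀ t ∈ Icc τ T,
      ‖X t - X' t‖ ^ 2 + ‖Y t - Y' t‖ ^ 2 ≤
        μ * (‖h (X T) - h' (X T)‖ ^ 2 +
          ∫ s in τ..T, (‖Fb s (X s) (Y s) - Fb' s (X s) (Y s)‖ ^ 2 +
            ‖ηb s (X s) - ηb' s (X s)‖ ^ 2)) := by
  refine ⟨1 / (2 * (K + 2) ^ 2), by positivity, fun T _ C₁ _ => ⟨12 * (K + 2) ^ 2, by positivity,
    ?_⟩⟩
  intro ηb ηb' Fb Fb' h h' hηc hη'c hFc hF'c _ _ _ hLη' _ hLh' _ hLF' _ _ _ _ τ hτ _ hγ x X Y X' Y'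
    hsol hsol' t ht
  have hsub : Icc τ T ⊆ Icc 0 T := Icc_subset_Icc_left hτ
  have hδ : (K + 2) ^ 2 * (T - τ) ≤ 1 / 2 := by
    rw [le_div_iff₀ (by positivity)] at hγ
    linarith
  exact hsol.norm_sub_sq_add_norm_sub_sq_le hsol' (hηc.mono (prod_mono hsub subset_rfl))
    (hη'c.mono (prod_mono hsub subset_rfl)) (hFc.mono (prod_mono hsub subset_rfl))
    (hF'c.mono (prod_mono hsub subset_rfl)) (fun t ht => hLη' t (hsub ht)) hLh'
    (fun t ht => hLF' t (hsub ht)) hK.le hδ ht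

/-- Stability estimate: the distance between the solutions of two forward–backward
systems with different data is controlled by the distance between the data along
the first solution. -/
theorem stmt_17 {n : ℕ} (hn : 1 ≤ n) (K : ℝ) (hK : 0 < K) :
    ∃ γ' : ℝ, 0 < γ' ∧ ∀ T : ℝ, 0 < T → ∀ C₁ : ℝ, 0 < C₁ →
    ∃ μ : ℝ, 0 < μ ∧
    ∀ (ηb ηb' : ℝ → (Fin n → ℝ) → Fin n → ℝ)
      (Fb Fb' : ℝ → (Fin n → ℝ) → (Fin n → ℝ) → Fin n → ℝ)
      (h h' : (Fin n → ℝ) → Fin n → ℝ),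
    ContinuousOn (fun p : ℝ × (Fin n → ℝ) => ηb p.1 p.2)
      (Icc (0:ℝ) T ×ˢ (univ : Set (Fin n → ℝ))) →
    ContinuousOn (fun p : ℝ × (Fin n → ℝ) => ηb' p.1 p.2)
      (Icc (0:ℝ) T ×ˢ (univ : Set (Fin n → ℝ))) →
    ContinuousOn (fun p : ℝ × (Fin n → ℝ) × (Fin n → ℝ) => Fb p.1 p.2.1 p.2.2)
      (Icc (0:ℝ) T ×ˢ (univ : Set ((Fin n → ℝ) × (Fin n → ℝ)))) →
    ContinuousOn (fun p : ℝ × (Fin n → ℝ) × (Fin n → ℝ) => Fb' p.1 p.2.1 p.2.2)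
      (Icc (0:ℝ) T ×ˢ (univ : Set ((Fin n → ℝ) × (Fin n → ℝ)))) →
    Continuous h → Continuous h' →
    (∀ t ∈ Icc (0:ℝ) T, ∀ x x', ‖ηb t x - ηb t x'‖ ≤ K * ‖x - x'‖) →
    (∀ t ∈ Icc (0:ℝ) T, ∀ x x', ‖ηb' t x - ηb' t x'‖ ≤ K * ‖x - x'‖) →
    (∀ x x', ‖h x - h x'‖ ≤ K * ‖x - x'‖) →
    (∀ x x', ‖h' x - h' x'‖ ≤ K * ‖x - x'‖) →
    (∀ t ∈ Icc (0:ℝ) T, ∀ x x' v v',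
      ‖Fb t x v - Fb t x' v'‖ ≤ K * (‖x - x'‖ + ‖v - v'‖)) →
    (∀ t ∈ Icc (0:ℝ) T, ∀ x x' v v',
      ‖Fb' t x v - Fb' t x' v'‖ ≤ K * (‖x - x'‖ + ‖v - v'‖)) →
    (∀ x, ‖h x‖ ≤ C₁) → (∀ x, ‖h' x‖ ≤ C₁) →
    (∀ t ∈ Icc (0:ℝ) T, ∀ x v, ‖Fb t x v‖ ≤ C₁ * (1 + ‖v‖)) →
    (∀ t ∈ Icc (0:ℝ) T, ∀ x v, ‖Fb' t x v‖ ≤ C₁ * (1 + ‖v‖)) →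
    ∀ τ : ℝ, 0 ≤ τ → τ ≤ T → T - τ ≤ γ' → ∀ x : Fin n → ℝ,
    ∀ X Y X' Y' : ℝ → Fin n → ℝ,
    FBSol T τ ηb Fb h x X Y → FBSol T τ ηb' Fb' h' x X' Y' →
    ∀ t ∈ Icc τ T,
      ‖X t - X' t‖ ^ 2 + ‖Y t - Y' t‖ ^ 2 ≤
        μ * (‖h (X T) - h' (X T)‖ ^ 2 +
          ∫ s in τ..T, (‖Fb s (X s) (Y s) - Fb' s (X s) (Y s)‖ ^ 2 +
            ‖ηb s (X s) - ηb' s (X s)‖ ^ 2)) :=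
  stmt_17_general K hK
end
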